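/- arXiv:2604.06908 — 7 statements merged into one kernel-verified Lean document; each statement's English description precedes it below -/
import Mathlib

section
/- Let ρ and σ be density matrices on ℂ^n with σ positive definite. If 0 < α < 1, then Tr(ρ σ^{α−1}) ≥ (Tr ρ^α)^{1/α} · (Tr σ^α)^{(α−1)/α}. If α > 1, then the reverse inequality holds: Tr(ρ σ^{α−1}) ≤ (Tr ρ^α)^{1/α} · (Tr σ^α)^{(α−1)/α}. -/
/-!
Diagonalise `ρ = ∑ λⱼ |vⱼ⟩⟨vⱼ|` and `σ = ∑ μᵢ |uᵢ⟩⟨uᵢ|`. With the overlaps `Mᵢⱼ = |⟨uᵢ, vⱼ⟩|²`,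
`Tr(ρ σ^(α-1)) = ∑ Mᵢⱼ λⱼ μᵢ^(α-1)`, and since `M` is doubly stochastic also
`Tr ρ^α = ∑ Mᵢⱼ λⱼ^α` and `Tr σ^α = ∑ Mᵢⱼ μᵢ^α`. Both inequalities are then the weighted Hölder
inequality `∑ νₖ tₖ ≤ (∑ νₖ)^(1-1/p) (∑ νₖ tₖ^p)^(1/p)` for the weights `Mᵢⱼ μᵢ^α` and the
ratios `λⱼ / μᵢ`: with `p = α` and `tₖ` the ratios when `α > 1`, and with `p = 1/α` and `tₖ` their
`α`-th powers when `α < 1`.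
-/

open Matrix ComplexOrder

/-- Real power of a Hermitian matrix via its spectral decomposition:
`A ^ r = ∑ i, (λ i) ^ r |x i⟩⟨x i|` (and `0` if `A` is not Hermitian). -/
noncomputable def mRpow {m : Type*} [Fintype m] [DecidableEq m]
    (A : Matrix m m ℂ) (r : ℝ) : Matrix m m ℂ :=
  if hA : A.IsHermitian then
    (hA.eigenvectorUnitary : Matrix m m ℂ) *
      Matrix.diagonal (fun i => ((hA.eigenvalues i ^ r : ℝ) : ℂ)) *
      star (hA.eigenvectorUnitary : Matrix m m ℂ)
  else 0

/-- The quantum relative α-entropy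
`S_α(ρ‖σ) = (α/(1−α))·log Tr(ρ σ^{α−1}) − (1/(1−α))·log Tr(ρ^α) + log Tr(σ^α)`. -/
noncomputable def Salpha {m : Type*} [Fintype m] [DecidableEq m]
    (α : ℝ) (ρ σ : Matrix m m ℂ) : ℝ :=
  α / (1 - α) * Real.log ((ρ * mRpow σ (α - 1)).trace.re)
    - 1 / (1 - α) * Real.log ((mRpow ρ α).trace.re)
    + Real.log ((mRpow σ α).trace.re)

open Finset

namespace Real

variable {ι : Type*} (s : Finset ι) {α : ℝ} {w f g : ι → ℝ}

theorem sum_mul_mul_rpow_sub_one_le (hα : 1 < α) (hw : ∀ i, 0 ≤ w i) (hf : ∀ i, 0 ≤ f i)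
    (hg : ∀ i, 0 < g i) :
    ∑ i ∈ s, w i * (f i * g i ^ (α - 1)) ≤
      (∑ i ∈ s, w i * f i ^ α) ^ (1 / α) * (∑ i ∈ s, w i * g i ^ α) ^ ((α - 1) / α) := by
  have holder := inner_le_weight_mul_Lp_of_nonneg s hα.le
    (fun i ↦ w i * g i ^ α) (fun i ↦ f i / g i)
    (fun i ↦ mul_nonneg (hw i) (rpow_nonneg (hg i).le _)) (fun i ↦ div_nonneg (hf i) (hg i).le)
  have h₁ : ∀ i, w i * g i ^ α * (f i / g i) = w i * (f i * g i ^ (α - 1)) := fun i ↦ by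
    rw [rpow_sub_one (hg i).ne']; field_simp
  have h₂ : ∀ i, w i * g i ^ α * (f i / g i) ^ α = w i * f i ^ α := fun i ↦ by
    rw [div_rpow (hf i) (hg i).le]; field_simp [(rpow_pos_of_pos (hg i) α).ne']
  simp only [h₁, h₂] at holder
  rw [show (α - 1) / α = 1 - α⁻¹ by field_simp, one_div, mul_comm]
  exact holder

theorem le_sum_mul_mul_rpow_sub_one (hα₀ : 0 < α) (hα₁ : α < 1) (hw : ∀ i, 0 ≤ w i)
    (hf : ∀ i, 0 ≤ f i) (hg : ∀ i, 0 < g i) :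
    (∑ i ∈ s, w i * f i ^ α) ^ (1 / α) * (∑ i ∈ s, w i * g i ^ α) ^ ((α - 1) / α) ≤
      ∑ i ∈ s, w i * (f i * g i ^ (α - 1)) := by
  set L := ∑ i ∈ s, w i * f i ^ α
  set D := ∑ i ∈ s, w i * g i ^ α
  set S := ∑ i ∈ s, w i * (f i * g i ^ (α - 1))
  have hL : 0 ≤ L := sum_nonneg fun i _ ↦ mul_nonneg (hw i) (rpow_nonneg (hf i) _)
  have hD : 0 ≤ D := sum_nonneg fun i _ ↦ mul_nonneg (hw i) (rpow_nonneg (hg i).le _)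
  have hS : 0 ≤ S := sum_nonneg fun i _ ↦
    mul_nonneg (hw i) (mul_nonneg (hf i) (rpow_nonneg (hg i).le _))
  have holder := inner_le_weight_mul_Lp_of_nonneg s (one_le_inv₀ hα₀ |>.2 hα₁.le)
    (fun i ↦ w i * g i ^ α) (fun i ↦ (f i / g i) ^ α)
    (fun i ↦ mul_nonneg (hw i) (rpow_nonneg (hg i).le _))
    (fun i ↦ rpow_nonneg (div_nonneg (hf i) (hg i).le) _)
  have h₁ : ∀ i, w i * g i ^ α * ((f i / g i) ^ α) ^ α⁻¹ = w i * (f i * g i ^ (α - 1)) :=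
    fun i ↦ by
      rw [← rpow_mul (div_nonneg (hf i) (hg i).le), mul_inv_cancel₀ hα₀.ne', rpow_one,
        rpow_sub_one (hg i).ne']
      field_simp
  have h₂ : ∀ i, w i * g i ^ α * (f i / g i) ^ α = w i * f i ^ α := fun i ↦ by
    rw [div_rpow (hf i) (hg i).le]; field_simp [(rpow_pos_of_pos (hg i) α).ne']
  simp only [h₁, h₂, inv_inv] at holder
  change L ≤ D ^ (1 - α) * S ^ α at holder
  rcases hD.eq_or_lt with hD₀ | hD₀
  · rw [← hD₀, zero_rpow (div_ne_zero (by linarith) hα₀.ne'), mul_zero]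
    exact hS
  calc L ^ (1 / α) * D ^ ((α - 1) / α)
      ≤ (D ^ (1 - α) * S ^ α) ^ (1 / α) * D ^ ((α - 1) / α) := by gcongr
    _ = S := by
      rw [mul_rpow (rpow_nonneg hD _) (rpow_nonneg hS _), ← rpow_mul hD, ← rpow_mul hS,
        mul_right_comm, ← rpow_add hD₀, mul_one_div_cancel hα₀.ne', rpow_one,
        show (1 - α) * (1 / α) + (α - 1) / α = 0 by ring, rpow_zero, one_mul]

end Real

namespace Matrix

variable {m : Type*} [Fintype m] [DecidableEq m]

section DoublyStochastic

variable {M : Matrix m m ℝ}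

theorem sum_sum_mul_left_of_mem_doublyStochastic (hM : M ∈ doublyStochastic ℝ m)
    (y : m → ℝ) :
    ∑ i, ∑ j, M i j * y i = ∑ i, y i := by
  simp_rw [← Finset.sum_mul, sum_row_of_mem_doublyStochastic hM, one_mul]

theorem sum_sum_mul_right_of_mem_doublyStochastic (hM : M ∈ doublyStochastic ℝ m)
    (x : m → ℝ) :
    ∑ i, ∑ j, M i j * x j = ∑ j, x j :=
  sum_mulVec_of_mem_doublyStochastic hM

variable {α : ℝ} {x y : m → ℝ}

theorem sum_mul_mul_rpow_sub_one_le_of_mem_doublyStochastic (hM : M ∈ doublyStochastic ℝ m)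
    (hα : 1 < α) (hx : ∀ j, 0 ≤ x j) (hy : ∀ i, 0 < y i) :
    ∑ i, ∑ j, M i j * (x j * y i ^ (α - 1)) ≤
      (∑ j, x j ^ α) ^ (1 / α) * (∑ i, y i ^ α) ^ ((α - 1) / α) := by
  have h := Real.sum_mul_mul_rpow_sub_one_le (Finset.univ : Finset (m × m)) hα
    (w := fun p ↦ M p.1 p.2) (f := fun p ↦ x p.2) (g := fun p ↦ y p.1)
    (fun _ ↦ nonneg_of_mem_doublyStochastic hM) (fun p ↦ hx p.2) (fun p ↦ hy p.1)
  simpa only [Fintype.sum_prod_type, sum_sum_mul_left_of_mem_doublyStochastic hM,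
    sum_sum_mul_right_of_mem_doublyStochastic hM] using h

theorem le_sum_mul_mul_rpow_sub_one_of_mem_doublyStochastic (hM : M ∈ doublyStochastic ℝ m)
    (hα₀ : 0 < α) (hα₁ : α < 1) (hx : ∀ j, 0 ≤ x j) (hy : ∀ i, 0 < y i) :
    (∑ j, x j ^ α) ^ (1 / α) * (∑ i, y i ^ α) ^ ((α - 1) / α) ≤
      ∑ i, ∑ j, M i j * (x j * y i ^ (α - 1)) := by
  have h := Real.le_sum_mul_mul_rpow_sub_one (Finset.univ : Finset (m × m)) hα₀ hα₁
    (w := fun p ↦ M p.1 p.2) (f := fun p ↦ x p.2) (g := fun p ↦ y p.1)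
    (fun _ ↦ nonneg_of_mem_doublyStochastic hM) (fun p ↦ hx p.2) (fun p ↦ hy p.1)
  simpa only [Fintype.sum_prod_type, sum_sum_mul_left_of_mem_doublyStochastic hM,
    sum_sum_mul_right_of_mem_doublyStochastic hM] using h

end DoublyStochastic

theorem sum_normSq_apply_eq_one_of_mem_unitaryGroup {U : Matrix m m ℂ}
    (hU : U ∈ unitaryGroup m ℂ) (i : m) : ∑ j, Complex.normSq (U i j) = 1 := by
  have h := congr_arg Complex.re (congr_fun₂ (mem_unitaryGroup_iff.mp hU) i i)
  simpa [mul_apply, Complex.mul_conj] using h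

theorem map_normSq_mem_doublyStochastic {U : Matrix m m ℂ} (hU : U ∈ unitaryGroup m ℂ) :
    U.map Complex.normSq ∈ doublyStochastic ℝ m := by
  refine mem_doublyStochastic_iff_sum.2 ⟨fun _ _ ↦ Complex.normSq_nonneg _,
    sum_normSq_apply_eq_one_of_mem_unitaryGroup hU, fun j ↦ ?_⟩
  simpa using sum_normSq_apply_eq_one_of_mem_unitaryGroup (Unitary.star_mem hU) j

theorem trace_mul_conj_diagonal (A U : Matrix m m ℂ) (v : m → ℂ) :
    (A * (U * diagonal v * star U)).trace = ∑ i, (star U * A * U) i i * v i := by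
  rw [← Matrix.mul_assoc, ← Matrix.mul_assoc, trace_mul_cycle, ← Matrix.mul_assoc]
  simp [trace, mul_diagonal]

theorem conj_diagonal_ofReal_apply_self (W : Matrix m m ℂ) (f : m → ℝ) (i : m) :
    (W * diagonal (fun j ↦ (f j : ℂ)) * star W) i i =
      ((∑ j, Complex.normSq (W i j) * f j : ℝ) : ℂ) := by
  rw [mul_apply, Complex.ofReal_sum]
  refine Finset.sum_congr rfl fun j _ ↦ ?_
  rw [mul_diagonal, star_apply, RCLike.star_def, mul_right_comm, Complex.mul_conj,
    Complex.ofReal_mul]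

end Matrix

namespace Matrix.IsHermitian

variable {m : Type*} [Fintype m] [DecidableEq m] {A B : Matrix m m ℂ}

theorem mRpow_eq (hA : A.IsHermitian) (r : ℝ) :
    mRpow A r = (hA.eigenvectorUnitary : Matrix m m ℂ) *
      diagonal (fun i ↦ ((hA.eigenvalues i ^ r : ℝ) : ℂ)) *
      star (hA.eigenvectorUnitary : Matrix m m ℂ) :=
  dif_pos hA

theorem re_trace_mRpow (hA : A.IsHermitian) (r : ℝ) :
    (mRpow A r).trace.re = ∑ i, hA.eigenvalues i ^ r := by
  rw [hA.mRpow_eq, trace_mul_cycle, Unitary.coe_star_mul_self, Matrix.one_mul, trace_diagonal,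
    ← Complex.ofReal_sum, Complex.ofReal_re]

theorem conj_eq_conj_diagonal_eigenvalues (hA : A.IsHermitian) (U : Matrix m m ℂ) :
    star U * A * U = (star U * hA.eigenvectorUnitary) *
      diagonal (fun j ↦ (hA.eigenvalues j : ℂ)) * star (star U * hA.eigenvectorUnitary) := by
  conv_lhs => rw [hA.spectral_theorem]
  simp only [Unitary.conjStarAlgAut_apply, star_mul, star_star, Matrix.mul_assoc]
  rfl

theorem re_trace_mul_mRpow (hA : A.IsHermitian) (hB : B.IsHermitian) (r : ℝ) :
    (A * mRpow B r).trace.re = ∑ i, ∑ j,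
      (star (hB.eigenvectorUnitary : Matrix m m ℂ) * hA.eigenvectorUnitary).map
        Complex.normSq i j * (hA.eigenvalues j * hB.eigenvalues i ^ r) := by
  rw [hB.mRpow_eq, trace_mul_conj_diagonal, Complex.re_sum]
  refine Finset.sum_congr rfl fun i _ ↦ ?_
  rw [hA.conj_eq_conj_diagonal_eigenvalues, conj_diagonal_ofReal_apply_self,
    ← Complex.ofReal_mul, Complex.ofReal_re, Finset.sum_mul]
  exact Finset.sum_congr rfl fun j _ ↦ by simp only [map_apply]; ring

end Matrix.IsHermitian

theorem trace_rpow_holder_general {n : ℕ} (α : ℝ)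
    (ρ σ : Matrix (Fin n) (Fin n) ℂ)
    (hρ : ρ.PosSemidef)
    (hσ : σ.PosDef) :
    ((0 < α ∧ α < 1) →
      ((mRpow ρ α).trace.re) ^ (1/α) * ((mRpow σ α).trace.re) ^ ((α - 1)/α)
        ≤ (ρ * mRpow σ (α - 1)).trace.re) ∧
    (1 < α →
      (ρ * mRpow σ (α - 1)).trace.re
        ≤ ((mRpow ρ α).trace.re) ^ (1/α) * ((mRpow σ α).trace.re) ^ ((α - 1)/α)) := by
  have hM := map_normSq_mem_doublyStochastic
    (mul_mem (Unitary.star_mem hσ.1.eigenvectorUnitary.2) hρ.1.eigenvectorUnitary.2)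
  rw [hρ.1.re_trace_mRpow, hσ.1.re_trace_mRpow, hρ.1.re_trace_mul_mRpow hσ.1]
  exact ⟨fun ⟨hα₀, hα₁⟩ ↦ le_sum_mul_mul_rpow_sub_one_of_mem_doublyStochastic hM
      hα₀ hα₁ hρ.eigenvalues_nonneg hσ.eigenvalues_pos,
    fun hα ↦ sum_mul_mul_rpow_sub_one_le_of_mem_doublyStochastic hM hα
      hρ.eigenvalues_nonneg hσ.eigenvalues_pos⟩

/-- Key Hölder-type inequality: for density matrices `ρ, σ` with `σ` positive definite,
`Tr(ρ σ^{α−1}) ≥ (Tr ρ^α)^{1/α} (Tr σ^α)^{(α−1)/α}` for `0 < α < 1`, with the reverse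
inequality for `α > 1`. -/
theorem trace_rpow_holder {n : ℕ} (α : ℝ)
    (ρ σ : Matrix (Fin n) (Fin n) ℂ)
    (hρ : ρ.PosSemidef) (hρ1 : ρ.trace = 1)
    (hσ : σ.PosDef) (hσ1 : σ.trace = 1) :
    ((0 < α ∧ α < 1) →
      ((mRpow ρ α).trace.re) ^ (1/α) * ((mRpow σ α).trace.re) ^ ((α - 1)/α)
        ≤ (ρ * mRpow σ (α - 1)).trace.re) ∧
    (1 < α →
      (ρ * mRpow σ (α - 1)).trace.re
        ≤ ((mRpow ρ α).trace.re) ^ (1/α) * ((mRpow σ α).trace.re) ^ ((α - 1)/α)) :=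
  trace_rpow_holder_general α ρ σ hρ hσ
end

section
/- Let α > 0 with α ≠ 1, and let ρ, σ be density matrices on ℂ^n and τ, ω be density matrices on ℂ^m, with σ and ω positive definite. Then the quantum relative α-entropy is additive under Kronecker (tensor) products: S_α(ρ ⊗ τ ‖ σ ⊗ ω) = S_α(ρ‖σ) + S_α(τ‖ω). -/
open Matrix ComplexOrder

/-
Diagonalising `A = U diag(λ) U*` and `B = V diag(μ) V*` diagonalises `A ⊗ B` by the unitary
`U ⊗ V`, with eigenvalues `λ i * μ j`. The spectral power does not depend on the chosen
diagonalisation and `(λ μ)^r = λ^r μ^r` for nonnegative reals, so `(A ⊗ B)^r = A^r ⊗ B^r`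
for positive semidefinite `A`, `B`. As the trace is multiplicative on Kronecker products,
each of the three traces in `S_α` factors into the corresponding traces for the two systems;
these are positive reals, so their logarithms split into sums.
-/

open scoped Kronecker

theorem Matrix.mul_diagonal_comp_eq_diagonal_comp_mul {ι R : Type*} [Fintype ι] [DecidableEq ι]
    [CommSemiring R] [IsDomain R] {W : Matrix ι ι R} {a b : ι → R}
    (h : W * diagonal a = diagonal b * W) (f : R → R) :
    W * diagonal (f ∘ a) = diagonal (f ∘ b) * W := by
  ext i j
  have hij : W i j * a j = b i * W i j := by
    simpa [mul_diagonal, diagonal_mul] using congrFun (congrFun h i) j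
  rw [mul_diagonal, diagonal_mul]
  rcases eq_or_ne (W i j) 0 with hW | hW
  · simp [hW]
  · rw [mul_comm (b i)] at hij
    simp [mul_left_cancel₀ hW hij, mul_comm]

theorem Matrix.mul_mul_star_kronecker_mul_mul_star {ι κ R : Type*} [Fintype ι] [Fintype κ]
    [CommSemiring R] [StarRing R] (U D : Matrix ι ι R) (V E : Matrix κ κ R) :
    (U * D * star U) ⊗ₖ (V * E * star V) = (U ⊗ₖ V) * (D ⊗ₖ E) * star (U ⊗ₖ V) := by
  simp only [star_eq_conjTranspose, conjTranspose_kronecker, mul_kronecker_mul]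

open MatrixOrder in
theorem Matrix.PosSemidef.trace_mul_posDef_pos {ι 𝕜 : Type*} [Fintype ι] [DecidableEq ι]
    [RCLike 𝕜] {A B : Matrix ι ι 𝕜} (hA : A.PosSemidef) (hA0 : A ≠ 0) (hB : B.PosDef) :
    0 < (A * B).trace := by
  set S := CFC.sqrt B
  have hS : star S = S := (CFC.sqrt_nonneg B).isSelfAdjoint.star_eq
  have hSu : IsUnit S := (CFC.isUnit_sqrt_iff B hB.posSemidef.nonneg).mpr hB.isUnit
  have hSAS : (star S * A * S).PosSemidef := hA.conjTranspose_mul_mul_same S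
  have hSAS0 : star S * A * S ≠ 0 := by
    rwa [Ne, Matrix.mul_assoc, hSu.star.mul_right_eq_zero, hSu.mul_left_eq_zero]
  have htr : (A * B).trace = (star S * A * S).trace := by
    rw [hS, ← CFC.sqrt_mul_sqrt_self B hB.posSemidef.nonneg, ← Matrix.mul_assoc,
      trace_mul_cycle]
  rw [htr]
  exact hSAS.trace_nonneg.lt_of_ne' (mt hSAS.trace_eq_zero_iff.mp hSAS0)

theorem Real.log_re_mul_of_pos {z w : ℂ} (hz : 0 < z) (hw : 0 < w) :
    Real.log (z * w).re = Real.log z.re + Real.log w.re := by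
  obtain ⟨hz, hz'⟩ := Complex.pos_iff.mp hz
  obtain ⟨hw, -⟩ := Complex.pos_iff.mp hw
  rw [Complex.mul_re, ← hz', zero_mul, sub_zero, Real.log_mul hz.ne' hw.ne']

section mRpow

variable {ι κ : Type*} [Fintype ι] [DecidableEq ι] [Fintype κ] [DecidableEq κ]

lemma mRpow_of_isHermitian {A : Matrix ι ι ℂ} (hA : A.IsHermitian) (r : ℝ) :
    mRpow A r = (hA.eigenvectorUnitary : Matrix ι ι ℂ) *
      diagonal (fun i => ((hA.eigenvalues i ^ r : ℝ) : ℂ)) *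
      star (hA.eigenvectorUnitary : Matrix ι ι ℂ) :=
  dif_pos hA

lemma mRpow_unitary_mul_diagonal_mul_star {U : Matrix ι ι ℂ} (hU : U ∈ unitaryGroup ι ℂ)
    (d : ι → ℝ) (r : ℝ) : mRpow (U * diagonal (fun i => (d i : ℂ)) * star U) r =
      U * diagonal (fun i => ((d i ^ r : ℝ) : ℂ)) * star U := by
  set A := U * diagonal (fun i => (d i : ℂ)) * star U
  have hA : A.IsHermitian :=
    isHermitian_mul_mul_conjTranspose U (isHermitian_diagonal_of_self_adjoint _ (by ext; simp))
  set V : Matrix ι ι ℂ := (hA.eigenvectorUnitary : Matrix ι ι ℂ)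
  have hU₁ : star U * U = 1 := Unitary.star_mul_self_of_mem hU
  have hU₂ : U * star U = 1 := Unitary.mul_star_self_of_mem hU
  have hV₁ : star V * V = 1 := Unitary.star_mul_self_of_mem hA.eigenvectorUnitary.2
  have hV₂ : V * star V = 1 := Unitary.mul_star_self_of_mem hA.eigenvectorUnitary.2
  have hA_eq : A = V * diagonal (fun i => (hA.eigenvalues i : ℂ)) * star V := hA.spectral_theorem
  -- `star U * V` intertwines the two diagonalisations of `A`, hence also their `r`-th powers.
  have intertwine : (star U * V) * diagonal (fun i => (hA.eigenvalues i : ℂ)) =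
      diagonal (fun i => (d i : ℂ)) * (star U * V) := by
    calc star U * V * diagonal (fun i => (hA.eigenvalues i : ℂ)) = star U * A * V := by
          conv_rhs => rw [hA_eq]
          simp only [Matrix.mul_assoc, hV₁, Matrix.mul_one]
      _ = _ := by simp only [A, ← Matrix.mul_assoc, hU₁, Matrix.one_mul]
  have intertwine_rpow :=
    mul_diagonal_comp_eq_diagonal_comp_mul intertwine (fun z => ((z.re ^ r : ℝ) : ℂ))
  simp only [Function.comp_def, Complex.ofReal_re] at intertwine_rpow
  rw [mRpow_of_isHermitian hA]
  calc V * _ * star V = U * ((star U * V) *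
        diagonal (fun i => ((hA.eigenvalues i ^ r : ℝ) : ℂ))) * star V := by
        simp only [← Matrix.mul_assoc, hU₂, Matrix.one_mul]
    _ = _ := by
        rw [intertwine_rpow]
        simp only [Matrix.mul_assoc, hV₂, Matrix.mul_one]

lemma mRpow_kronecker {A : Matrix ι ι ℂ} {B : Matrix κ κ ℂ} (hA : A.PosSemidef)
    (hB : B.PosSemidef) (r : ℝ) : mRpow (A ⊗ₖ B) r = mRpow A r ⊗ₖ mRpow B r := by
  set U : Matrix ι ι ℂ := (hA.1.eigenvectorUnitary : Matrix ι ι ℂ)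
  set V : Matrix κ κ ℂ := (hB.1.eigenvectorUnitary : Matrix κ κ ℂ)
  have hAB : A ⊗ₖ B = (U ⊗ₖ V) *
      diagonal (fun p => ((hA.1.eigenvalues p.1 * hB.1.eigenvalues p.2 : ℝ) : ℂ)) *
      star (U ⊗ₖ V) := by
    conv_lhs => rw [hA.1.spectral_theorem, hB.1.spectral_theorem]
    rw [Unitary.conjStarAlgAut_apply, Unitary.conjStarAlgAut_apply,
      mul_mul_star_kronecker_mul_mul_star, diagonal_kronecker_diagonal]
    simp only [Function.comp_apply, Complex.ofReal_mul]
    rfl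
  rw [hAB, mRpow_unitary_mul_diagonal_mul_star
      (kronecker_mem_unitary hA.1.eigenvectorUnitary.2 hB.1.eigenvectorUnitary.2),
    mRpow_of_isHermitian hA.1, mRpow_of_isHermitian hB.1, mul_mul_star_kronecker_mul_mul_star,
    diagonal_kronecker_diagonal]
  congr 3
  ext p
  rw [Real.mul_rpow (hA.eigenvalues_nonneg _) (hB.eigenvalues_nonneg _), Complex.ofReal_mul]

lemma trace_mRpow {A : Matrix ι ι ℂ} (hA : A.IsHermitian) (r : ℝ) :
    (mRpow A r).trace = ((∑ i, hA.eigenvalues i ^ r : ℝ) : ℂ) := by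
  rw [mRpow_of_isHermitian hA, trace_mul_cycle,
    Unitary.star_mul_self_of_mem hA.eigenvectorUnitary.2, Matrix.one_mul, trace_diagonal,
    Complex.ofReal_sum]

lemma trace_mRpow_pos {A : Matrix ι ι ℂ} (hA : A.PosSemidef) (hA0 : A ≠ 0) (r : ℝ) :
    0 < (mRpow A r).trace := by
  obtain ⟨i, hi⟩ := Function.ne_iff.mp (mt hA.1.eigenvalues_eq_zero_iff.mp hA0)
  rw [trace_mRpow hA.1, Complex.zero_lt_real]
  exact Finset.sum_pos' (fun j _ => Real.rpow_nonneg (hA.eigenvalues_nonneg j) r)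
    ⟨i, Finset.mem_univ i, Real.rpow_pos_of_pos ((hA.eigenvalues_nonneg i).lt_of_ne' hi) r⟩

lemma posDef_mRpow {A : Matrix ι ι ℂ} (hA : A.PosDef) (r : ℝ) : (mRpow A r).PosDef := by
  rw [mRpow_of_isHermitian hA.1, Unitary.isUnit_coe.posDef_star_right_conjugate_iff,
    posDef_diagonal_iff]
  exact fun i => Complex.zero_lt_real.mpr (Real.rpow_pos_of_pos (hA.eigenvalues_pos i) r)

end mRpow

open Kronecker in
theorem Salpha_kronecker_additive_general {n m : ℕ} (α : ℝ)
    (ρ σ : Matrix (Fin n) (Fin n) ℂ) (τ ω : Matrix (Fin m) (Fin m) ℂ)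
    (hρ : ρ.PosSemidef) (hρ1 : ρ.trace = 1)
    (hσ : σ.PosDef) (hσ1 : σ.trace = 1)
    (hτ : τ.PosSemidef) (hτ1 : τ.trace = 1)
    (hω : ω.PosDef) (hω1 : ω.trace = 1) :
    Salpha α (ρ ⊗ₖ τ) (σ ⊗ₖ ω) = Salpha α ρ σ + Salpha α τ ω := by
  have ne_zero {k : ℕ} {M : Matrix (Fin k) (Fin k) ℂ} (h : M.trace = 1) : M ≠ 0 := by
    rintro rfl
    simp at h
  have hσ' := hσ.posSemidef
  have hω' := hω.posSemidef
  have hρσ := hρ.trace_mul_posDef_pos (ne_zero hρ1) (posDef_mRpow hσ (α - 1))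
  have hτω := hτ.trace_mul_posDef_pos (ne_zero hτ1) (posDef_mRpow hω (α - 1))
  have hρα := trace_mRpow_pos hρ (ne_zero hρ1) α
  have hτα := trace_mRpow_pos hτ (ne_zero hτ1) α
  have hσα := trace_mRpow_pos hσ' (ne_zero hσ1) α
  have hωα := trace_mRpow_pos hω' (ne_zero hω1) α
  unfold Salpha
  rw [mRpow_kronecker hσ' hω', mRpow_kronecker hσ' hω', mRpow_kronecker hρ hτ,
    ← mul_kronecker_mul, trace_kronecker, trace_kronecker, trace_kronecker,
    Real.log_re_mul_of_pos hρσ hτω, Real.log_re_mul_of_pos hρα hτα,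
    Real.log_re_mul_of_pos hσα hωα]
  ring

open Kronecker in
/-- Additivity of the quantum relative α-entropy under Kronecker (tensor) products. -/
theorem Salpha_kronecker_additive {n m : ℕ} (α : ℝ) (hα : 0 < α) (hα1 : α ≠ 1)
    (ρ σ : Matrix (Fin n) (Fin n) ℂ) (τ ω : Matrix (Fin m) (Fin m) ℂ)
    (hρ : ρ.PosSemidef) (hρ1 : ρ.trace = 1)
    (hσ : σ.PosDef) (hσ1 : σ.trace = 1)
    (hτ : τ.PosSemidef) (hτ1 : τ.trace = 1)
    (hω : ω.PosDef) (hω1 : ω.trace = 1) :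
    Salpha α (ρ ⊗ₖ τ) (σ ⊗ₖ ω) = Salpha α ρ σ + Salpha α τ ω :=
  Salpha_kronecker_additive_general α ρ σ τ ω hρ hρ1 hσ hσ1 hτ hτ1 hω hω1
end

section
/- Let ρ and σ be positive definite density matrices on ℂ^n and let t ∈ (0,1). Then the matrix ρ^t σ^{1−t} is Hermitian if and only if ρσ = σρ. Consequently, the generalized mixture M_{ρ,σ}^t := ρ^t σ^{1−t} / Tr(ρ^t σ^{1−t}) is a density matrix if and only if ρ and σ commute. -/
open Matrix ComplexOrder

/-! On positive definite matrices `mRpow` is the continuous functional calculus power `A ^ r`.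
For strictly positive `a` and `r ≠ 0`, each of `a` and `a ^ r` is a continuous function of the
other, so an element commutes with `a ^ r` iff it commutes with `a`; hence `ρ ^ t` and
`σ ^ (1 - t)` commute iff `ρ` and `σ` do, and a product of two self-adjoint elements is
self-adjoint iff its factors commute. Commuting strictly positive elements have a strictly
positive product, whose normalization is a density matrix. Conversely the trace of a product of
Hermitian matrices is real, so a normalization that is a density matrix forces the product itself
to be Hermitian. -/

open scoped MatrixOrder

section ContinuousFunctionalCalculus

variable {A : Type*} [Ring A] [PartialOrder A] [StarRing A] [StarOrderedRing A]
  [TopologicalSpace A] [IsTopologicalRing A] [T2Space A] [Algebra ℝ A]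
  [ContinuousFunctionalCalculus ℝ A IsSelfAdjoint] [NonnegSpectrumClass ℝ A]

lemma Commute.rpow_right {a b : A} (h : Commute b a) (r : ℝ) : Commute b (a ^ r) :=
  (h.symm.cfc_nnreal _).symm

lemma IsStrictlyPositive.commute_rpow_right_iff {a b : A} (ha : IsStrictlyPositive a) {r : ℝ}
    (hr : r ≠ 0) : Commute b (a ^ r) ↔ Commute b a := by
  refine ⟨fun h => ?_, fun h => h.rpow_right r⟩
  simpa [CFC.rpow_rpow_inv a r hr] using h.rpow_right r⁻¹

lemma IsStrictlyPositive.commute_rpow_rpow_iff {a b : A} (ha : IsStrictlyPositive a)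
    (hb : IsStrictlyPositive b) {r s : ℝ} (hr : r ≠ 0) (hs : s ≠ 0) :
    Commute (a ^ r) (b ^ s) ↔ Commute a b := by
  rw [hb.commute_rpow_right_iff hs, Commute.symm_iff, ha.commute_rpow_right_iff hr,
    Commute.symm_iff]

end ContinuousFunctionalCalculus

namespace Matrix

variable {m : Type*} [Fintype m]

lemma nonempty_of_trace_ne_zero {R : Type*} [AddCommMonoid R] {A : Matrix m m R}
    (h : A.trace ≠ 0) : Nonempty m := by
  by_contra hm
  simp [trace, not_nonempty_iff.mp hm] at h

lemma IsHermitian.isSelfAdjoint_trace_mul {R : Type*} [CommRing R] [StarRing R]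
    {A B : Matrix m m R} (hA : A.IsHermitian) (hB : B.IsHermitian) :
    IsSelfAdjoint (A * B).trace := by
  rw [IsSelfAdjoint, ← trace_conjTranspose, conjTranspose_mul, hA.eq, hB.eq, trace_mul_comm]

variable {𝕜 : Type*} [RCLike 𝕜]

lemma isHermitian_of_posSemidef_trace_inv_smul {A : Matrix m m 𝕜}
    (hA : IsSelfAdjoint A.trace) (hpsd : (A.trace⁻¹ • A).PosSemidef)
    (htr : (A.trace⁻¹ • A).trace = 1) : A.IsHermitian := by
  have hc : A.trace ≠ 0 := by
    rintro hc
    simp [hc] at htr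
  show IsSelfAdjoint A
  simpa [smul_smul, mul_inv_cancel₀ hc] using hA.smul hpsd.isHermitian

lemma PosDef.posSemidef_trace_inv_smul [Nonempty m] {A : Matrix m m 𝕜} (hA : A.PosDef) :
    (A.trace⁻¹ • A).PosSemidef ∧ (A.trace⁻¹ • A).trace = 1 := by
  have hc := hA.trace_pos
  exact ⟨hA.posSemidef.smul (inv_nonneg.mpr hc.le),
    by rw [trace_smul, smul_eq_mul, inv_mul_cancel₀ hc.ne']⟩

variable [DecidableEq m]

lemma PosSemidef.mRpow_eq_rpow {A : Matrix m m ℂ} (hA : A.PosSemidef) (r : ℝ) :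
    mRpow A r = A ^ r := by
  rw [CFC.rpow_eq_cfc_real hA.nonneg, hA.isHermitian.cfc_eq, mRpow, dif_pos hA.isHermitian]
  rfl

end Matrix

theorem mixture_density_iff_commute_general {n : ℕ} (t : ℝ) (ht : 0 < t) (ht1 : t < 1)
    (ρ σ : Matrix (Fin n) (Fin n) ℂ)
    (hρ : ρ.PosDef) (hρ1 : ρ.trace = 1)
    (hσ : σ.PosDef) :
    ((mRpow ρ t * mRpow σ (1 - t)).IsHermitian ↔ ρ * σ = σ * ρ) ∧
    ((((mRpow ρ t * mRpow σ (1 - t)).trace)⁻¹ • (mRpow ρ t * mRpow σ (1 - t))).PosSemidef ∧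
        (((mRpow ρ t * mRpow σ (1 - t)).trace)⁻¹ • (mRpow ρ t * mRpow σ (1 - t))).trace = 1
      ↔ ρ * σ = σ * ρ) := by
  have : Nonempty (Fin n) := Matrix.nonempty_of_trace_ne_zero (hρ1 ▸ one_ne_zero)
  rw [hρ.posSemidef.mRpow_eq_rpow, hσ.posSemidef.mRpow_eq_rpow]
  have hρt := hρ.isStrictlyPositive.rpow _ t
  have hσt := hσ.isStrictlyPositive.rpow _ (1 - t)
  have commute_iff : Commute (ρ ^ t) (σ ^ (1 - t)) ↔ ρ * σ = σ * ρ :=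
    hρ.isStrictlyPositive.commute_rpow_rpow_iff hσ.isStrictlyPositive ht.ne'
      (sub_ne_zero.mpr ht1.ne')
  have hermitian_iff : (ρ ^ t * σ ^ (1 - t)).IsHermitian ↔ ρ * σ = σ * ρ :=
    (hρt.isSelfAdjoint.commute_iff hσt.isSelfAdjoint).symm.trans commute_iff
  refine ⟨hermitian_iff, fun ⟨hpsd, htr⟩ => hermitian_iff.mp ?_, fun h => ?_⟩
  · exact Matrix.isHermitian_of_posSemidef_trace_inv_smul
      (Matrix.IsHermitian.isSelfAdjoint_trace_mul hρt.isSelfAdjoint hσt.isSelfAdjoint) hpsd htr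
  · exact ((hρt.commute_iff hσt).mp (commute_iff.mpr h)).posDef.posSemidef_trace_inv_smul

/-- For positive definite density matrices `ρ, σ` and `t ∈ (0,1)`, the matrix
`ρ^t σ^{1−t}` is Hermitian iff `ρσ = σρ`; consequently the generalized mixture
`M = ρ^t σ^{1−t} / Tr(ρ^t σ^{1−t})` is a density matrix iff `ρ` and `σ` commute. -/
theorem mixture_density_iff_commute {n : ℕ} (t : ℝ) (ht : 0 < t) (ht1 : t < 1)
    (ρ σ : Matrix (Fin n) (Fin n) ℂ)
    (hρ : ρ.PosDef) (hρ1 : ρ.trace = 1)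
    (hσ : σ.PosDef) (hσ1 : σ.trace = 1) :
    ((mRpow ρ t * mRpow σ (1 - t)).IsHermitian ↔ ρ * σ = σ * ρ) ∧
    ((((mRpow ρ t * mRpow σ (1 - t)).trace)⁻¹ • (mRpow ρ t * mRpow σ (1 - t))).PosSemidef ∧
        (((mRpow ρ t * mRpow σ (1 - t)).trace)⁻¹ • (mRpow ρ t * mRpow σ (1 - t))).trace = 1
      ↔ ρ * σ = σ * ρ) :=
  mixture_density_iff_commute_general t ht ht1 ρ σ hρ hρ1 hσ
end

section
/- Let ρ, σ, τ, ω be pairwise commuting positive definite density matrices on ℂ^n, let t ∈ [0,1], and let α > 1. Define ‖A‖_α = (Tr A^α)^{1/α}, M_{ρ,σ}^t = ρ^t σ^{1−t} / Tr(ρ^t σ^{1−t}), and Z_{ρ,σ}^t = Tr[ ( (ρ/‖ρ‖_α)^t (σ/‖σ‖_α)^{1−t} )^α ]. Then S_α(M_{ρ,σ}^t ‖ M_{τ,ω}^t) ≥ t·S_α(ρ‖τ) + (1−t)·S_α(σ‖ω) + (1/(α−1))·log Z_{ρ,σ}^t + log Z_{τ,ω}^t. -/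
/-!
Commuting positive definite matrices are simultaneously unitarily diagonalizable, and every
quantity in the statement is computed eigenvalue by eigenvalue, so the inequality is one about
positive vectors `p, q, u, w`. The classical `S_α` is invariant under rescaling either argument,
so the normalisations inside `M` and `Z` only contribute terms `t log ∑ pᵅ`, ... that cancel
against those of `t S_α(p‖u) + (1-t) S_α(q‖w)`. What remains is `α/(α-1)` times the Hölder
inequality `∑ (p u^(α-1))^t (q w^(α-1))^(1-t) ≤ (∑ p u^(α-1))^t (∑ q w^(α-1))^(1-t)`.
-/

open Matrix ComplexOrder

/-- The Schatten α-norm `‖A‖_α = (Tr A^α)^{1/α}`. -/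
noncomputable def schattenNorm {m : Type*} [Fintype m] [DecidableEq m]
    (α : ℝ) (A : Matrix m m ℂ) : ℝ :=
  ((mRpow A α).trace.re) ^ (1/α)

/-- The generalized mixture `M_{ρ,σ}^t = ρ^t σ^{1−t} / Tr(ρ^t σ^{1−t})`. -/
noncomputable def genMix {m : Type*} [Fintype m] [DecidableEq m]
    (t : ℝ) (ρ σ : Matrix m m ℂ) : Matrix m m ℂ :=
  ((mRpow ρ t * mRpow σ (1 - t)).trace)⁻¹ • (mRpow ρ t * mRpow σ (1 - t))

/-- The normalization factor `Z_{ρ,σ}^t = Tr[((ρ/‖ρ‖_α)^t (σ/‖σ‖_α)^{1−t})^α]`. -/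
noncomputable def Zfactor {m : Type*} [Fintype m] [DecidableEq m]
    (α t : ℝ) (ρ σ : Matrix m m ℂ) : ℝ :=
  (mRpow (mRpow ((Complex.ofReal (schattenNorm α ρ))⁻¹ • ρ) t *
      mRpow ((Complex.ofReal (schattenNorm α σ))⁻¹ • σ) (1 - t)) α).trace.re

theorem LinearMap.IsSymmetric.exists_orthonormalBasis_apply_eq_smul_of_commute
    {𝕜 E ι κ : Type*} [RCLike 𝕜] [NormedAddCommGroup E] [InnerProductSpace 𝕜 E]
    [FiniteDimensional 𝕜 E] [Fintype κ] {T : ι → E →ₗ[𝕜] E} (hT : ∀ i, (T i).IsSymmetric)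
    (hTT : Pairwise fun i j => Commute (T i) (T j)) (hκ : Module.finrank 𝕜 E = Fintype.card κ) :
    ∃ (b : OrthonormalBasis κ 𝕜 E) (d : ι → κ → ℝ), ∀ i j, T i (b j) = (d i j : 𝕜) • b j := by
  classical
  -- `subordinateOrthonormalBasis` needs a finite index type, so keep only the nonzero joint
  -- eigenspaces; by independence there are finitely many.
  let V := fun χ : ι → 𝕜 => ⨅ i, Module.End.eigenspace (T i) (χ i)
  have hV := directSum_isInternal_of_pairwise_commute hT hTT
  have : Finite {χ // V χ ≠ ⊥} :=
    (Submodule.finite_ne_bot_of_iSupIndep hV.submodule_iSupIndep).to_subtype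
  have := Fintype.ofFinite {χ // V χ ≠ ⊥}
  have hV₀ := DirectSum.isInternal_ne_bot_iff.mpr hV
  have hV' := (orthogonalFamily_iInf_eigenspaces hT).comp
    (Subtype.val_injective (p := fun χ => V χ ≠ ⊥))
  let e := Fintype.equivFin κ
  let b := (hV₀.subordinateOrthonormalBasis hκ hV').reindex e.symm
  let χ j := (hV₀.subordinateOrthonormalBasisIndex hκ (e j) hV').1
  have hb : ∀ i j, T i (b j) = χ j i • b j := fun i j => by
    have := hV₀.subordinateOrthonormalBasis_subordinate hκ (e j) hV'
    rw [OrthonormalBasis.reindex_apply, Equiv.symm_symm]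
    exact Module.End.mem_eigenspace_iff.mp ((Submodule.mem_iInf _).mp this i)
  have hreal : ∀ i j, (RCLike.re (χ j i) : 𝕜) = χ j i := fun i j =>
    RCLike.conj_eq_iff_re.mp ((hT i).conj_eigenvalue_eq_self
      (Module.End.hasEigenvalue_of_hasEigenvector
        ⟨Module.End.mem_eigenspace_iff.mpr (hb i j), b.orthonormal.ne_zero j⟩))
  exact ⟨b, fun i j => RCLike.re (χ j i), fun i j => by rw [hreal, hb]⟩

section UnitaryDiag

variable {m : Type*} [Fintype m] [DecidableEq m]

noncomputable def unitaryDiag (U : unitaryGroup m ℂ) (f : m → ℝ) : Matrix m m ℂ :=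
  (U : Matrix m m ℂ) * diagonal (fun i => ((f i : ℝ) : ℂ)) * star (U : Matrix m m ℂ)

variable (U : unitaryGroup m ℂ)

lemma unitaryDiag_eq_conjStarAlgAut (f : m → ℝ) :
    unitaryDiag U f =
      Unitary.conjStarAlgAut ℝ _ U (diagonalAlgHom ℝ (fun i => algebraMap ℝ ℂ (f i))) := rfl

lemma isHermitian_unitaryDiag (f : m → ℝ) : (unitaryDiag U f).IsHermitian := by
  rw [unitaryDiag, star_eq_conjTranspose]
  exact isHermitian_mul_mul_conjTranspose _
    (isHermitian_diagonal_iff.mpr fun i => Complex.conj_ofReal _)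

lemma unitaryDiag_mul (f g : m → ℝ) :
    unitaryDiag U f * unitaryDiag U g = unitaryDiag U (f * g) := by
  simp only [unitaryDiag_eq_conjStarAlgAut, ← map_mul]
  congr 2; ext i; simp

lemma ofReal_smul_unitaryDiag (c : ℝ) (f : m → ℝ) :
    (c : ℂ) • unitaryDiag U f = unitaryDiag U (c • f) := by
  rw [Complex.coe_smul]
  simp only [unitaryDiag_eq_conjStarAlgAut, ← map_smul]
  congr 2; ext i; simp

lemma trace_unitaryDiag (f : m → ℝ) : (unitaryDiag U f).trace = ((∑ i, f i : ℝ) : ℂ) := by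
  rw [unitaryDiag, trace_mul_cycle, Unitary.coe_star_mul_self, Matrix.one_mul, trace_diagonal]
  push_cast; rfl

lemma aeval_unitaryDiag (P : Polynomial ℝ) (f : m → ℝ) :
    Polynomial.aeval (unitaryDiag U f) P = unitaryDiag U (fun i => P.eval (f i)) := by
  rw [unitaryDiag_eq_conjStarAlgAut, Polynomial.aeval_algHom_apply,
    Polynomial.aeval_algHom_apply, Polynomial.aeval_pi_apply]
  simp only [Polynomial.aeval_algebraMap_apply_eq_algebraMap_eval]
  rfl

/-- On the eigenvalues of both diagonalizations, `φ` agrees with one interpolating polynomial. -/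
lemma unitaryDiag_comp_eq_of_eq {U₁ U₂ : unitaryGroup m ℂ} {f g : m → ℝ}
    (h : unitaryDiag U₁ f = unitaryDiag U₂ g) (φ : ℝ → ℝ) :
    unitaryDiag U₁ (φ ∘ f) = unitaryDiag U₂ (φ ∘ g) := by
  classical
  set s := Finset.univ.image f ∪ Finset.univ.image g
  set P := Lagrange.interpolate s id φ
  have hP : ∀ x ∈ s, P.eval x = φ x := fun x hx =>
    Lagrange.eval_interpolate_at_node φ Function.injective_id.injOn hx
  have hPf : φ ∘ f = fun i => P.eval (f i) := funext fun i => (hP _ (by simp [s])).symm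
  have hPg : φ ∘ g = fun i => P.eval (g i) := funext fun i => (hP _ (by simp [s])).symm
  rw [hPf, hPg, ← aeval_unitaryDiag, ← aeval_unitaryDiag, h]

lemma mRpow_unitaryDiag (f : m → ℝ) (r : ℝ) :
    mRpow (unitaryDiag U f) r = unitaryDiag U (fun i => f i ^ r) := by
  have hA := isHermitian_unitaryDiag U f
  have hspec : unitaryDiag U f = unitaryDiag hA.eigenvectorUnitary hA.eigenvalues := by
    conv_lhs => rw [hA.spectral_theorem]
    rfl
  rw [mRpow, dif_pos hA]
  exact (unitaryDiag_comp_eq_of_eq hspec (· ^ r)).symm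

lemma pos_of_posDef_unitaryDiag {f : m → ℝ} (h : (unitaryDiag U f).PosDef) (i : m) :
    0 < f i := by
  have hU : IsUnit (U : Matrix m m ℂ) := (Unitary.toUnits U).isUnit
  have hD := h.conjTranspose_mul_mul_same (mulVec_injective_of_isUnit hU)
  rw [unitaryDiag, ← star_eq_conjTranspose, ← Matrix.mul_assoc, ← Matrix.mul_assoc,
    Unitary.coe_star_mul_self, Matrix.one_mul, Matrix.mul_assoc, Unitary.coe_star_mul_self,
    Matrix.mul_one, posDef_diagonal_iff] at hD
  exact_mod_cast hD i

lemma eq_unitaryDiag_of_mulVec_eq {A : Matrix m m ℂ}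
    (b : OrthonormalBasis m ℂ (EuclideanSpace ℂ m)) (μ : m → ℝ)
    (h : ∀ j, A *ᵥ b j = (μ j : ℂ) • b j) :
    A = unitaryDiag
      ⟨_, (EuclideanSpace.basisFun m ℂ).toMatrix_orthonormalBasis_mem_unitary b⟩ μ := by
  set U : unitaryGroup m ℂ :=
    ⟨_, (EuclideanSpace.basisFun m ℂ).toMatrix_orthonormalBasis_mem_unitary b⟩
  have hU : ∀ k j, (U : Matrix m m ℂ) k j = b j k := fun k j => by
    simp [U, Module.Basis.toMatrix_apply]
  have hAU : A * U = U * diagonal (fun i => ((μ i : ℝ) : ℂ)) := by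
    ext k j
    calc (A * U) k j = (A *ᵥ b j) k := by simp [mul_apply, mulVec, dotProduct, hU]
      _ = _ := by rw [h j, mul_diagonal, hU]; simp [mul_comm]
  rw [unitaryDiag, ← hAU, Matrix.mul_assoc, mem_unitaryGroup_iff.mp U.2, Matrix.mul_one]

theorem exists_unitaryDiag_of_commute {ι : Type*} (A : ι → Matrix m m ℂ)
    (hA : ∀ i, (A i).IsHermitian) (hAA : ∀ i j, Commute (A i) (A j)) :
    ∃ (U : unitaryGroup m ℂ) (d : ι → m → ℝ), ∀ i, A i = unitaryDiag U (d i) := by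
  let T := fun i => toEuclideanLin (A i)
  have hTT : Pairwise fun i j => Commute (T i) (T j) := fun i j _ =>
    LinearMap.ext fun x => by simp [T, toLpLin_apply, mulVec_mulVec, (hAA i j).eq]
  obtain ⟨b, d, hb⟩ := LinearMap.IsSymmetric.exists_orthonormalBasis_apply_eq_smul_of_commute
    (fun i => isSymmetric_toEuclideanLin_iff.mpr (hA i)) hTT finrank_euclideanSpace
  refine ⟨_, d, fun i => eq_unitaryDiag_of_mulVec_eq b (d i) fun j => ?_⟩
  simpa [T, toLpLin_apply] using congrArg WithLp.ofLp (hb i j)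

end UnitaryDiag

section Commutative

open Real Finset

variable {ι : Type*}

noncomputable def geomMix (t : ℝ) (p q : ι → ℝ) : ι → ℝ := fun i => p i ^ t * q i ^ (1 - t)

variable {α t : ℝ} {p q : ι → ℝ}

lemma geomMix_pos (hp : ∀ i, 0 < p i) (hq : ∀ i, 0 < q i) (i : ι) : 0 < geomMix t p q i := by
  unfold geomMix; have := hp i; have := hq i; positivity

lemma geomMix_smul {a b : ℝ} (ha : 0 ≤ a) (hb : 0 ≤ b) (hp : ∀ i, 0 ≤ p i)
    (hq : ∀ i, 0 ≤ q i) :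
    geomMix t (a • p) (b • q) = (a ^ t * b ^ (1 - t)) • geomMix t p q := by
  ext i
  simp only [geomMix, Pi.smul_apply, smul_eq_mul, mul_rpow ha (hp i), mul_rpow hb (hq i)]
  ring

lemma geomMix_mul_rpow_geomMix {u w : ι → ℝ} (hp : ∀ i, 0 < p i) (hq : ∀ i, 0 < q i)
    (hu : ∀ i, 0 < u i) (hw : ∀ i, 0 < w i) (i : ι) :
    geomMix t p q i * geomMix t u w i ^ (α - 1)
      = geomMix t (fun j => p j * u j ^ (α - 1)) (fun j => q j * w j ^ (α - 1)) i := by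
  have := hp i; have := hq i; have := hu i; have := hw i
  simp only [geomMix]
  rw [mul_rpow (by positivity) (by positivity), mul_rpow (by positivity) (by positivity),
    mul_rpow (by positivity) (by positivity), ← rpow_mul (hu i).le, ← rpow_mul (hw i).le,
    ← rpow_mul (hu i).le, ← rpow_mul (hw i).le]
  ring_nf

variable [Fintype ι]

noncomputable def classicalSalpha (α : ℝ) (p q : ι → ℝ) : ℝ :=
  α / (1 - α) * log (∑ i, p i * q i ^ (α - 1))
    - 1 / (1 - α) * log (∑ i, p i ^ α) + log (∑ i, q i ^ α)

noncomputable def normalizeSum (p : ι → ℝ) : ι → ℝ := (∑ i, p i)⁻¹ • p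

noncomputable def normalizeLp (α : ℝ) (p : ι → ℝ) : ι → ℝ :=
  ((∑ i, p i ^ α) ^ (1 / α))⁻¹ • p

lemma sum_pos_of_pos [Nonempty ι] {x : ι → ℝ} (hx : ∀ i, 0 < x i) : 0 < ∑ i, x i :=
  sum_pos (fun i _ => hx i) univ_nonempty

lemma log_sum_rpow_smul [Nonempty ι] {c : ℝ} {x : ι → ℝ} (hc : 0 < c) (hx : ∀ i, 0 < x i) :
    log (∑ i, (c • x) i ^ α) = α * log c + log (∑ i, x i ^ α) := by
  simp only [Pi.smul_apply, smul_eq_mul, mul_rpow hc.le (hx _).le, ← mul_sum]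
  rw [log_mul (by positivity) (sum_pos_of_pos fun i => by have := hx i; positivity).ne',
    log_rpow hc]

lemma classicalSalpha_smul [Nonempty ι] (hα : α ≠ 1) {a b : ℝ} (ha : 0 < a) (hb : 0 < b)
    (hp : ∀ i, 0 < p i) (hq : ∀ i, 0 < q i) :
    classicalSalpha α (a • p) (b • q) = classicalSalpha α p q := by
  have hpq : 0 < ∑ i, p i * q i ^ (α - 1) :=
    sum_pos_of_pos fun i => by have := hp i; have := hq i; positivity
  have hsum : ∑ i, (a • p) i * (b • q) i ^ (α - 1)
      = a * b ^ (α - 1) * ∑ i, p i * q i ^ (α - 1) := by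
    rw [mul_sum]
    refine sum_congr rfl fun i _ => ?_
    simp only [Pi.smul_apply, smul_eq_mul, mul_rpow hb.le (hq i).le]
    ring
  have h1α : 1 - α ≠ 0 := sub_ne_zero.mpr hα.symm
  simp only [classicalSalpha, hsum, log_sum_rpow_smul ha hp, log_sum_rpow_smul hb hq]
  rw [log_mul (by positivity) hpq.ne', log_mul ha.ne' (by positivity), log_rpow hb]
  field_simp
  ring

lemma log_sum_geomMix_normalizeLp [Nonempty ι] (hα : α ≠ 0) (hp : ∀ i, 0 < p i)
    (hq : ∀ i, 0 < q i) :
    log (∑ i, geomMix t (normalizeLp α p) (normalizeLp α q) i ^ α)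
      = log (∑ i, geomMix t p q i ^ α) - t * log (∑ i, p i ^ α)
        - (1 - t) * log (∑ i, q i ^ α) := by
  have hP := sum_pos_of_pos fun i => rpow_pos_of_pos (hp i) α
  have hQ := sum_pos_of_pos fun i => rpow_pos_of_pos (hq i) α
  have ha : 0 < ((∑ i, p i ^ α) ^ (1 / α))⁻¹ := by positivity
  have hb : 0 < ((∑ i, q i ^ α) ^ (1 / α))⁻¹ := by positivity
  rw [normalizeLp, normalizeLp,
    geomMix_smul ha.le hb.le (fun i => (hp i).le) (fun i => (hq i).le),
    log_sum_rpow_smul (by positivity) (geomMix_pos hp hq),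
    log_mul (by positivity) (by positivity), log_rpow ha, log_rpow hb, log_inv, log_inv,
    log_rpow hP, log_rpow hQ]
  field_simp
  ring

lemma sum_geomMix_le [Nonempty ι] (ht0 : 0 ≤ t) (ht1 : t ≤ 1) (hp : ∀ i, 0 < p i)
    (hq : ∀ i, 0 < q i) :
    ∑ i, geomMix t p q i ≤ (∑ i, p i) ^ t * (∑ i, q i) ^ (1 - t) := by
  set P := ∑ i, p i
  set Q := ∑ i, q i
  have hP : 0 < P := sum_pos_of_pos hp
  have hQ : 0 < Q := sum_pos_of_pos hq
  have hsplit : ∀ i, geomMix t p q i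
      = P ^ t * Q ^ (1 - t) * ((p i / P) ^ t * (q i / Q) ^ (1 - t)) := by
    intro i
    rw [div_rpow (hp i).le hP.le, div_rpow (hq i).le hQ.le, geomMix]
    field_simp
  calc ∑ i, geomMix t p q i
      = P ^ t * Q ^ (1 - t) * ∑ i, (p i / P) ^ t * (q i / Q) ^ (1 - t) := by
        rw [mul_sum]; exact sum_congr rfl fun i _ => hsplit i
    _ ≤ P ^ t * Q ^ (1 - t) * ∑ i, (t * (p i / P) + (1 - t) * (q i / Q)) := by
        gcongr with i
        exact geom_mean_le_arith_mean2_weighted ht0 (by linarith) (by have := hp i; positivity)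
          (by have := hq i; positivity) (by ring)
    _ = P ^ t * Q ^ (1 - t) := by
        rw [sum_add_distrib, ← mul_sum, ← mul_sum, ← sum_div, ← sum_div, div_self hP.ne',
          div_self hQ.ne']
        ring

lemma log_sum_geomMix_le [Nonempty ι] (ht0 : 0 ≤ t) (ht1 : t ≤ 1) (hp : ∀ i, 0 < p i)
    (hq : ∀ i, 0 < q i) :
    log (∑ i, geomMix t p q i) ≤ t * log (∑ i, p i) + (1 - t) * log (∑ i, q i) := by
  have hP := sum_pos_of_pos hp
  have hQ := sum_pos_of_pos hq
  calc log (∑ i, geomMix t p q i)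
      ≤ log ((∑ i, p i) ^ t * (∑ i, q i) ^ (1 - t)) :=
        log_le_log (sum_pos_of_pos (geomMix_pos hp hq)) (sum_geomMix_le ht0 ht1 hp hq)
    _ = t * log (∑ i, p i) + (1 - t) * log (∑ i, q i) := by
        rw [log_mul (by positivity) (by positivity), log_rpow hP, log_rpow hQ]

theorem classicalSalpha_generalized_convexity {u w : ι → ℝ} (hα : 1 < α) (ht0 : 0 ≤ t)
    (ht1 : t ≤ 1) (hp : ∀ i, 0 < p i) (hq : ∀ i, 0 < q i) (hu : ∀ i, 0 < u i)
    (hw : ∀ i, 0 < w i) :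
    t * classicalSalpha α p u + (1 - t) * classicalSalpha α q w
        + 1 / (α - 1) * log (∑ i, geomMix t (normalizeLp α p) (normalizeLp α q) i ^ α)
        + log (∑ i, geomMix t (normalizeLp α u) (normalizeLp α w) i ^ α)
      ≤ classicalSalpha α (normalizeSum (geomMix t p q)) (normalizeSum (geomMix t u w)) := by
  rcases isEmpty_or_nonempty ι with hι | hι
  · simp [classicalSalpha]
  have hg := geomMix_pos (t := t) hp hq
  have hk := geomMix_pos (t := t) hu hw
  rw [normalizeSum, normalizeSum, classicalSalpha_smul hα.ne' (inv_pos.mpr (sum_pos_of_pos hg))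
    (inv_pos.mpr (sum_pos_of_pos hk)) hg hk, log_sum_geomMix_normalizeLp (by positivity) hp hq,
    log_sum_geomMix_normalizeLp (by positivity) hu hw]
  have hHolder := log_sum_geomMix_le ht0 ht1
    (fun i => mul_pos (hp i) (rpow_pos_of_pos (hu i) (α - 1)))
    (fun i => mul_pos (hq i) (rpow_pos_of_pos (hw i) (α - 1)))
  simp only [← geomMix_mul_rpow_geomMix hp hq hu hw] at hHolder
  have hc : 0 ≤ α / (α - 1) := div_nonneg (by linarith) (by linarith)
  have hα1 : α - 1 ≠ 0 := by linarith
  have e1 : α / (1 - α) = -(α / (α - 1)) := by rw [← neg_sub α 1, div_neg]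
  have e2 : 1 / (1 - α) = 1 - α / (α - 1) := by rw [← neg_sub α 1]; field_simp; ring
  have e3 : 1 / (α - 1) = α / (α - 1) - 1 := by field_simp; ring
  simp only [classicalSalpha, e1, e2, e3]
  linear_combination mul_le_mul_of_nonneg_left hHolder hc

end Commutative

section Reduction

variable {m : Type*} [Fintype m] [DecidableEq m] (U : unitaryGroup m ℂ) (α t : ℝ) (p q : m → ℝ)

lemma re_trace_unitaryDiag : (unitaryDiag U p).trace.re = ∑ i, p i := by
  rw [trace_unitaryDiag, Complex.ofReal_re]

lemma Salpha_unitaryDiag :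
    Salpha α (unitaryDiag U p) (unitaryDiag U q) = classicalSalpha α p q := by
  simp only [Salpha, classicalSalpha, mRpow_unitaryDiag, unitaryDiag_mul, re_trace_unitaryDiag,
    Pi.mul_apply]

lemma genMix_unitaryDiag :
    genMix t (unitaryDiag U p) (unitaryDiag U q)
      = unitaryDiag U (normalizeSum (geomMix t p q)) := by
  rw [genMix, mRpow_unitaryDiag, mRpow_unitaryDiag, unitaryDiag_mul, trace_unitaryDiag,
    ← Complex.ofReal_inv, ofReal_smul_unitaryDiag]
  rfl

lemma schattenNorm_unitaryDiag :
    schattenNorm α (unitaryDiag U p) = (∑ i, p i ^ α) ^ (1 / α) := by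
  rw [schattenNorm, mRpow_unitaryDiag, re_trace_unitaryDiag]

lemma Zfactor_unitaryDiag :
    Zfactor α t (unitaryDiag U p) (unitaryDiag U q)
      = ∑ i, geomMix t (normalizeLp α p) (normalizeLp α q) i ^ α := by
  rw [Zfactor, schattenNorm_unitaryDiag, schattenNorm_unitaryDiag, ← Complex.ofReal_inv,
    ← Complex.ofReal_inv, ofReal_smul_unitaryDiag, ofReal_smul_unitaryDiag, mRpow_unitaryDiag,
    mRpow_unitaryDiag, unitaryDiag_mul, mRpow_unitaryDiag, re_trace_unitaryDiag]
  rfl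

end Reduction

theorem Salpha_generalized_convexity_gt_one_general {n : ℕ} (α t : ℝ)
    (hα : 1 < α) (ht0 : 0 ≤ t) (ht1 : t ≤ 1)
    (ρ σ τ ω : Matrix (Fin n) (Fin n) ℂ)
    (hρ : ρ.PosDef)
    (hσ : σ.PosDef)
    (hτ : τ.PosDef)
    (hω : ω.PosDef)
    (hρσ : ρ * σ = σ * ρ) (hρτ : ρ * τ = τ * ρ) (hρω : ρ * ω = ω * ρ)
    (hστ : σ * τ = τ * σ) (hσω : σ * ω = ω * σ) (hτω : τ * ω = ω * τ) :
    t * Salpha α ρ τ + (1 - t) * Salpha α σ ω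
        + 1 / (α - 1) * Real.log (Zfactor α t ρ σ) + Real.log (Zfactor α t τ ω)
      ≤ Salpha α (genMix t ρ σ) (genMix t τ ω) := by
  obtain ⟨U, d, hd⟩ := exists_unitaryDiag_of_commute ![ρ, σ, τ, ω]
    (fun i => by fin_cases i; exacts [hρ.1, hσ.1, hτ.1, hω.1])
    (fun i j => by
      fin_cases i <;> fin_cases j <;> first | exact Commute.refl _ | assumption | exact Eq.symm ‹_›)
  obtain ⟨rfl, rfl, rfl, rfl⟩ : ρ = unitaryDiag U (d 0) ∧ σ = unitaryDiag U (d 1) ∧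
      τ = unitaryDiag U (d 2) ∧ ω = unitaryDiag U (d 3) := ⟨hd 0, hd 1, hd 2, hd 3⟩
  rw [Salpha_unitaryDiag, Salpha_unitaryDiag, genMix_unitaryDiag, genMix_unitaryDiag,
    Salpha_unitaryDiag, Zfactor_unitaryDiag, Zfactor_unitaryDiag]
  exact classicalSalpha_generalized_convexity hα ht0 ht1 (pos_of_posDef_unitaryDiag U hρ)
    (pos_of_posDef_unitaryDiag U hσ) (pos_of_posDef_unitaryDiag U hτ)
    (pos_of_posDef_unitaryDiag U hω)

/-- Generalized (nonlinear) joint convexity of the quantum relative α-entropy for `α > 1`: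
`S_α(M_{ρ,σ}^t ‖ M_{τ,ω}^t) ≥ t S_α(ρ‖τ) + (1−t) S_α(σ‖ω) + (1/(α−1)) log Z_{ρ,σ}^t + log Z_{τ,ω}^t`. -/
theorem Salpha_generalized_convexity_gt_one {n : ℕ} (α t : ℝ)
    (hα : 1 < α) (ht0 : 0 ≤ t) (ht1 : t ≤ 1)
    (ρ σ τ ω : Matrix (Fin n) (Fin n) ℂ)
    (hρ : ρ.PosDef) (hρ1 : ρ.trace = 1)
    (hσ : σ.PosDef) (hσ1 : σ.trace = 1)
    (hτ : τ.PosDef) (hτ1 : τ.trace = 1)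
    (hω : ω.PosDef) (hω1 : ω.trace = 1)
    (hρσ : ρ * σ = σ * ρ) (hρτ : ρ * τ = τ * ρ) (hρω : ρ * ω = ω * ρ)
    (hστ : σ * τ = τ * σ) (hσω : σ * ω = ω * σ) (hτω : τ * ω = ω * τ) :
    t * Salpha α ρ τ + (1 - t) * Salpha α σ ω
        + 1 / (α - 1) * Real.log (Zfactor α t ρ σ) + Real.log (Zfactor α t τ ω)
      ≤ Salpha α (genMix t ρ σ) (genMix t τ ω) :=
  Salpha_generalized_convexity_gt_one_general α t hα ht0 ht1 ρ σ τ ω hρ hσ hτ hω hρσ hρτ hρω hστ hσω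
    hτω
end

section
/- Let ρ and σ be density matrices on ℂ^n with σ positive definite, with spectral decompositions ρ = Σ_i p_i |x_i⟩⟨x_i| and σ = Σ_j q_j |y_j⟩⟨y_j| for orthonormal bases {|x_i⟩}, {|y_j⟩}. Then as α → 1 (with α ≠ 1), the quantum relative α-entropy S_α(ρ‖σ) tends to Umegaki's relative entropy: lim_{α→1} S_α(ρ‖σ) = Σ_{i: p_i > 0} p_i·log p_i − Σ_{i,j} p_i·log q_j·|⟨x_i|y_j⟩|² = Tr(ρ log ρ) − Tr(ρ log σ). -/
/-!
With `U`, `V` the unitaries whose columns are the eigenvectors `x i`, `y j`, we have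
`ρ = U diag(p) U*` and `σ = V diag(q) V*`. The functional calculus does not depend on the
diagonalising unitary, so `ρ^α`, `σ^α`, `log ρ` and `log σ` are diagonal in the same bases,
and every trace in `S_α` becomes a scalar expression in `p`, `q` and the transition
probabilities `|⟨x_i|y_j⟩|² = |(U* V)_{ij}|²`. Since `F(α) = α log Tr(ρ σ^{α-1}) − log Tr ρ^α`
vanishes at `α = 1`, the first two terms of `S_α` equal `F(α)/(1 − α) → −F'(1)`, while
`log Tr σ^α → 0`; computing `F'(1)` gives Umegaki's relative entropy.
-/

open Matrix ComplexOrder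

/-- Matrix logarithm of a Hermitian matrix via its spectral decomposition,
`log A = ∑_{i : λ i > 0} (log λ i) |x i⟩⟨x i|` (using `Real.log 0 = 0`). -/
noncomputable def mLog {m : Type*} [Fintype m] [DecidableEq m]
    (A : Matrix m m ℂ) : Matrix m m ℂ :=
  if hA : A.IsHermitian then
    (hA.eigenvectorUnitary : Matrix m m ℂ) *
      Matrix.diagonal (fun i => ((Real.log (hA.eigenvalues i) : ℝ) : ℂ)) *
      star (hA.eigenvectorUnitary : Matrix m m ℂ)
  else 0

namespace Matrix

variable {m : Type*} [Fintype m]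

lemma star_transpose_of_mul_transpose_of_apply (x y : m → m → ℂ) (i j : m) :
    (star (of x)ᵀ * (of y)ᵀ) i j = star (x i) ⬝ᵥ y j := by
  simp [mul_apply, dotProduct]

variable [DecidableEq m]

lemma sum_smul_vecMulVec_star_eq (c : m → ℂ) (v : m → m → ℂ) :
    ∑ i, c i • vecMulVec (v i) (star (v i)) = (of v)ᵀ * diagonal c * star (of v)ᵀ := by
  ext a b
  simp only [sum_apply, smul_apply, vecMulVec_apply, Pi.star_apply, smul_eq_mul, mul_apply,
    transpose_apply, of_apply, diagonal_apply, mul_ite, mul_zero, Finset.sum_ite_eq',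
    Finset.mem_univ, if_true, star_apply]
  exact Finset.sum_congr rfl fun j _ => by ring

lemma transpose_of_mem_unitaryGroup {v : m → m → ℂ}
    (hv : ∀ i j, star (v i) ⬝ᵥ v j = if i = j then 1 else 0) :
    (of v)ᵀ ∈ unitaryGroup m ℂ := by
  rw [mem_unitaryGroup_iff']
  ext i j
  rw [star_transpose_of_mul_transpose_of_apply, hv, one_apply]

lemma isHermitian_mul_diagonal_mul_star (U : Matrix m m ℂ) (d : m → ℝ) :
    (U * diagonal (fun i => (d i : ℂ)) * star U).IsHermitian :=
  isHermitian_mul_mul_conjTranspose U (isHermitian_diagonal_of_self_adjoint _ (by ext i; simp))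

lemma trace_mul_diagonal_mul_star_mul (U V : Matrix m m ℂ) (a b : m → ℝ) :
    (U * diagonal (fun i => (a i : ℂ)) * star U
      * (V * diagonal (fun j => (b j : ℂ)) * star V)).trace
      = ((∑ i, ∑ j, a i * b j * ‖(star U * V) i j‖ ^ 2 : ℝ) : ℂ) := by
  set W := star U * V
  set D := diagonal fun i => (a i : ℂ)
  set E := diagonal fun j => (b j : ℂ)
  have hcycle : (U * D * star U * (V * E * star V)).trace = (D * W * E * star W).trace := by
    calc (U * D * star U * (V * E * star V)).trace = (U * (D * W * E * star V)).trace := by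
          simp only [W, mul_assoc]
      _ = (D * W * E * star V * U).trace := trace_mul_comm _ _
      _ = (D * W * E * star W).trace := by simp only [W, star_mul, star_star, mul_assoc]
  rw [hcycle]
  simp only [trace, diag_apply, mul_apply (M := D * W * E), D, E, mul_diagonal, diagonal_mul,
    star_apply, RCLike.star_def, Complex.ofReal_sum]
  refine Finset.sum_congr rfl fun i _ => Finset.sum_congr rfl fun j _ => ?_
  have h : W i j * starRingEnd ℂ (W i j) = (‖W i j‖ : ℂ) ^ 2 := by
    rw [Complex.mul_conj, Complex.normSq_eq_norm_sq]; push_cast; rfl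
  push_cast
  rw [← h]
  ring

variable {U V : Matrix m m ℂ}

lemma mul_mul_star_eq_mul_mul_star_iff (hU : U ∈ unitaryGroup m ℂ) (hV : V ∈ unitaryGroup m ℂ)
    {D E : Matrix m m ℂ} :
    U * D * star U = V * E * star V ↔ D * (star U * V) = star U * V * E := by
  have hU₁ : star U * U = 1 := Unitary.star_mul_self_of_mem hU
  have hU₂ : U * star U = 1 := Unitary.mul_star_self_of_mem hU
  have hV₁ : star V * V = 1 := Unitary.star_mul_self_of_mem hV
  have hV₂ : V * star V = 1 := Unitary.mul_star_self_of_mem hV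
  constructor
  · intro h
    have := congr(star U * $h * V)
    simpa only [mul_assoc, hV₁, ← mul_assoc (star U) U, hU₁, one_mul, mul_one] using this
  · intro h
    have := congr(U * $h * star V)
    simpa only [mul_assoc, hV₂, ← mul_assoc U (star U), hU₂, one_mul, mul_one] using this

lemma diagonal_comp_mul_eq_mul_diagonal_comp {W : Matrix m m ℂ} {c d : m → ℝ}
    (h : diagonal (fun i => (c i : ℂ)) * W = W * diagonal (fun j => (d j : ℂ))) (f : ℝ → ℝ) :
    diagonal (fun i => (f (c i) : ℂ)) * W = W * diagonal (fun j => (f (d j) : ℂ)) := by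
  ext i j
  have hij := congr_fun₂ h i j
  simp only [diagonal_mul, mul_diagonal] at hij ⊢
  rcases eq_or_ne (W i j) 0 with hW | hW
  · simp [hW]
  · rw [mul_comm, mul_right_cancel₀ hW (hij.trans (mul_comm _ _)) |> Complex.ofReal_inj.mp]

lemma cfc_mul_diagonal_mul_star (hU : U ∈ unitaryGroup m ℂ) (d : m → ℝ) (f : ℝ → ℝ) :
    cfc f (U * diagonal (fun i => (d i : ℂ)) * star U)
      = U * diagonal (fun i => (f (d i) : ℂ)) * star U := by
  have hH := isHermitian_mul_diagonal_mul_star U d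
  have hspec := hH.spectral_theorem
  rw [Unitary.conjStarAlgAut_apply] at hspec
  rw [hH.cfc_eq, IsHermitian.cfc, Unitary.conjStarAlgAut_apply,
    mul_mul_star_eq_mul_mul_star_iff (SetLike.coe_mem _) hU]
  exact diagonal_comp_mul_eq_mul_diagonal_comp
    ((mul_mul_star_eq_mul_mul_star_iff (SetLike.coe_mem _) hU).mp hspec.symm) f

lemma posDef_mul_diagonal_mul_star_iff (hU : U ∈ unitaryGroup m ℂ) (d : m → ℝ) :
    (U * diagonal (fun i => (d i : ℂ)) * star U).PosDef ↔ ∀ i, 0 < d i := by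
  rw [IsUnit.posDef_star_right_conjugate_iff (Unitary.isUnit_coe (U := ⟨U, hU⟩)),
    posDef_diagonal_iff]
  simp only [Complex.zero_lt_real]

lemma trace_mul_diagonal_mul_star (hU : U ∈ unitaryGroup m ℂ) (a : m → ℝ) :
    (U * diagonal (fun i => (a i : ℂ)) * star U).trace = ((∑ i, a i : ℝ) : ℂ) := by
  rw [trace_mul_comm, ← mul_assoc, Unitary.star_mul_self_of_mem hU, one_mul, trace_diagonal,
    Complex.ofReal_sum]

lemma sum_norm_sq_apply_of_mem_unitaryGroup {W : Matrix m m ℂ} (hW : W ∈ unitaryGroup m ℂ) (i : m) :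
    ∑ j, ‖W i j‖ ^ 2 = 1 := by
  have h : (W * star W) i i = 1 := by rw [Unitary.mul_star_self_of_mem hW, one_apply_eq]
  simp only [mul_apply, star_apply, RCLike.star_def, Complex.mul_conj,
    Complex.normSq_eq_norm_sq] at h
  exact_mod_cast h

end Matrix

section SpectralCalculus

variable {m : Type*} [Fintype m] [DecidableEq m] {U V : Matrix m m ℂ}

lemma mRpow_mul_diagonal_mul_star (hU : U ∈ unitaryGroup m ℂ) (d : m → ℝ) (r : ℝ) :
    mRpow (U * diagonal (fun i => (d i : ℂ)) * star U) r
      = U * diagonal (fun i => ((d i ^ r : ℝ) : ℂ)) * star U := by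
  have hH := isHermitian_mul_diagonal_mul_star U d
  rw [mRpow, dif_pos hH, ← cfc_mul_diagonal_mul_star hU d (fun t => t ^ r), hH.cfc_eq,
    IsHermitian.cfc, Unitary.conjStarAlgAut_apply]
  rfl

lemma mLog_mul_diagonal_mul_star (hU : U ∈ unitaryGroup m ℂ) (d : m → ℝ) :
    mLog (U * diagonal (fun i => (d i : ℂ)) * star U)
      = U * diagonal (fun i => ((Real.log (d i) : ℝ) : ℂ)) * star U := by
  have hH := isHermitian_mul_diagonal_mul_star U d
  rw [mLog, dif_pos hH, ← cfc_mul_diagonal_mul_star hU d Real.log, hH.cfc_eq,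
    IsHermitian.cfc, Unitary.conjStarAlgAut_apply]
  rfl

lemma Salpha_mul_diagonal_mul_star (hU : U ∈ unitaryGroup m ℂ) (hV : V ∈ unitaryGroup m ℂ)
    (p q : m → ℝ) (α : ℝ) :
    Salpha α (U * diagonal (fun i => (p i : ℂ)) * star U)
        (V * diagonal (fun j => (q j : ℂ)) * star V)
      = α / (1 - α) * Real.log (∑ i, ∑ j, p i * q j ^ (α - 1) * ‖(star U * V) i j‖ ^ 2)
        - 1 / (1 - α) * Real.log (∑ i, p i ^ α) + Real.log (∑ j, q j ^ α) := by
  rw [Salpha, mRpow_mul_diagonal_mul_star hU, mRpow_mul_diagonal_mul_star hV,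
    mRpow_mul_diagonal_mul_star hV, trace_mul_diagonal_mul_star_mul,
    trace_mul_diagonal_mul_star hU, trace_mul_diagonal_mul_star hV]
  simp only [Complex.ofReal_re]

lemma re_trace_mul_mLog (U : Matrix m m ℂ) (hV : V ∈ unitaryGroup m ℂ) (p q : m → ℝ) :
    (U * diagonal (fun i => (p i : ℂ)) * star U
      * mLog (V * diagonal (fun j => (q j : ℂ)) * star V)).trace.re
      = ∑ i, ∑ j, p i * Real.log (q j) * ‖(star U * V) i j‖ ^ 2 := by
  rw [mLog_mul_diagonal_mul_star hV, trace_mul_diagonal_mul_star_mul, Complex.ofReal_re]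

lemma re_trace_mul_mLog_self (hU : U ∈ unitaryGroup m ℂ) (p : m → ℝ) :
    (U * diagonal (fun i => (p i : ℂ)) * star U
      * mLog (U * diagonal (fun i => (p i : ℂ)) * star U)).trace.re
      = ∑ i, p i * Real.log (p i) := by
  rw [re_trace_mul_mLog U hU, Unitary.star_mul_self_of_mem hU]
  simp [one_apply, apply_ite (fun z : ℂ => ‖z‖ ^ 2)]

end SpectralCalculus

open Filter Topology

lemma tendsto_div_one_sub_of_hasDerivAt {F : ℝ → ℝ} {D : ℝ} (hF : HasDerivAt F D 1)
    (h1 : F 1 = 0) : Tendsto (fun α => F α / (1 - α)) (𝓝[≠] 1) (𝓝 (-D)) := by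
  refine (hasDerivAt_iff_tendsto_slope.mp hF).neg.congr fun α => ?_
  rw [slope_def_field, h1, sub_zero, ← div_neg, neg_sub]

lemma hasDerivAt_const_rpow_one {p : ℝ} (hp : 0 ≤ p) :
    HasDerivAt (fun α : ℝ => p ^ α) (p * Real.log p) 1 := by
  rcases hp.eq_or_lt with rfl | hp
  · rw [zero_mul]
    apply (hasDerivAt_const (1 : ℝ) (0 : ℝ)).congr_of_eventuallyEq
    filter_upwards [eventually_ne_nhds one_ne_zero] with α hα using Real.zero_rpow hα
  · simpa [mul_comm] using (Real.hasStrictDerivAt_const_rpow hp 1).hasDerivAt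

lemma tendsto_renyi_divergence {ι κ : Type*} [Fintype ι] [Fintype κ]
    (p : ι → ℝ) (q : κ → ℝ) (c : ι → κ → ℝ) (hp : ∀ i, 0 ≤ p i) (hq : ∀ j, 0 < q j)
    (hc : ∑ i, ∑ j, p i * c i j = 1) (hps : ∑ i, p i = 1) (hqs : ∑ j, q j = 1) :
    Tendsto (fun α => α / (1 - α) * Real.log (∑ i, ∑ j, p i * q j ^ (α - 1) * c i j)
        - 1 / (1 - α) * Real.log (∑ i, p i ^ α) + Real.log (∑ j, q j ^ α)) (𝓝[≠] 1)
      (𝓝 (∑ i, p i * Real.log (p i) - ∑ i, ∑ j, p i * Real.log (q j) * c i j)) := by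
  set T₁ := fun α : ℝ => ∑ i, ∑ j, p i * q j ^ (α - 1) * c i j
  set T₂ := fun α : ℝ => ∑ i, p i ^ α
  set T₃ := fun α : ℝ => ∑ j, q j ^ α
  have hT₁ : HasDerivAt T₁ (∑ i, ∑ j, p i * Real.log (q j) * c i j) 1 := by
    refine HasDerivAt.fun_sum fun i _ => HasDerivAt.fun_sum fun j _ => ?_
    have h := ((hasDerivAt_id (1 : ℝ)).sub_const 1).const_rpow (hq j)
    simpa using (h.const_mul (p i)).mul_const (c i j)
  have hT₂ : HasDerivAt T₂ (∑ i, p i * Real.log (p i)) 1 :=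
    HasDerivAt.fun_sum fun i _ => hasDerivAt_const_rpow_one (hp i)
  have hT₃ : ContinuousAt T₃ 1 :=
    (HasDerivAt.fun_sum fun j _ => hasDerivAt_const_rpow_one (hq j).le).continuousAt
  have hT₁_one : T₁ 1 = 1 := by simpa [T₁] using hc
  have hT₂_one : T₂ 1 = 1 := by simpa [T₂] using hps
  have hT₃_one : T₃ 1 = 1 := by simpa [T₃] using hqs
  have hF : HasDerivAt (fun α => α * Real.log (T₁ α) - Real.log (T₂ α))
      (∑ i, ∑ j, p i * Real.log (q j) * c i j - ∑ i, p i * Real.log (p i)) 1 := by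
    have h := ((hasDerivAt_id' (x := (1 : ℝ))).fun_mul (hT₁.log (by simp [hT₁_one]))).fun_sub
      (hT₂.log (by simp [hT₂_one]))
    simpa [hT₁_one, hT₂_one] using h
  have hlog₃ : Tendsto (fun α => Real.log (T₃ α)) (𝓝[≠] 1) (𝓝 0) := by
    have h := ((Real.continuousAt_log (by simp [hT₃_one])).comp hT₃).tendsto
    simpa [Function.comp_def, hT₃_one] using h.mono_left nhdsWithin_le_nhds
  have h := (tendsto_div_one_sub_of_hasDerivAt hF (by simp [hT₁_one, hT₂_one])).add hlog₃
  rw [neg_sub, add_zero] at h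
  exact h.congr fun α => by ring

open Topology in
theorem Salpha_tendsto_umegaki_general {n : ℕ}
    (ρ σ : Matrix (Fin n) (Fin n) ℂ)
    (hρ1 : ρ.trace = 1)
    (hσ : σ.PosDef) (hσ1 : σ.trace = 1)
    (p q : Fin n → ℝ) (x y : Fin n → (Fin n → ℂ))
    (hp : ∀ i, 0 ≤ p i)
    (hx : ∀ i j, star (x i) ⬝ᵥ x j = if i = j then 1 else 0)
    (hy : ∀ i j, star (y i) ⬝ᵥ y j = if i = j then 1 else 0)
    (hρdec : ρ = ∑ i, (p i : ℂ) • vecMulVec (x i) (star (x i)))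
    (hσdec : σ = ∑ j, (q j : ℂ) • vecMulVec (y j) (star (y j))) :
    Filter.Tendsto (fun α => Salpha α ρ σ) (𝓝[≠] (1 : ℝ))
      (𝓝 ((∑ i, p i * Real.log (p i))
          - ∑ i, ∑ j, p i * Real.log (q j) * ‖star (x i) ⬝ᵥ y j‖ ^ 2)) ∧
    (∑ i, p i * Real.log (p i))
          - ∑ i, ∑ j, p i * Real.log (q j) * ‖star (x i) ⬝ᵥ y j‖ ^ 2
      = (ρ * mLog ρ).trace.re - (ρ * mLog σ).trace.re := by
  have hU := transpose_of_mem_unitaryGroup hx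
  have hV := transpose_of_mem_unitaryGroup hy
  have hW := star_transpose_of_mul_transpose_of_apply x y
  rw [sum_smul_vecMulVec_star_eq] at hρdec hσdec
  subst hρdec hσdec
  have hq : ∀ j, 0 < q j := (posDef_mul_diagonal_mul_star_iff hV q).mp hσ
  have hps : ∑ i, p i = 1 := by
    rwa [trace_mul_diagonal_mul_star hU, Complex.ofReal_eq_one] at hρ1
  have hqs : ∑ j, q j = 1 := by
    rwa [trace_mul_diagonal_mul_star hV, Complex.ofReal_eq_one] at hσ1
  have hc : ∑ i, ∑ j, p i * ‖star (x i) ⬝ᵥ y j‖ ^ 2 = 1 := by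
    simp_rw [← Finset.mul_sum, ← hW,
      sum_norm_sq_apply_of_mem_unitaryGroup (mul_mem (Unitary.star_mem hU) hV), mul_one, hps]
  refine ⟨?_, ?_⟩
  · simpa only [Salpha_mul_diagonal_mul_star hU hV, hW]
      using tendsto_renyi_divergence p q _ hp hq hc hps hqs
  · rw [re_trace_mul_mLog_self hU, re_trace_mul_mLog _ hV]
    simp only [hW]

open Topology in
/-- As `α → 1`, the quantum relative α-entropy tends to Umegaki's relative entropy
`∑_i p_i log p_i − ∑_{i,j} p_i log q_j |⟨x_i|y_j⟩|² = Tr(ρ log ρ) − Tr(ρ log σ)`. -/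
theorem Salpha_tendsto_umegaki {n : ℕ}
    (ρ σ : Matrix (Fin n) (Fin n) ℂ)
    (hρ : ρ.PosSemidef) (hρ1 : ρ.trace = 1)
    (hσ : σ.PosDef) (hσ1 : σ.trace = 1)
    (p q : Fin n → ℝ) (x y : Fin n → (Fin n → ℂ))
    (hp : ∀ i, 0 ≤ p i) (hq : ∀ j, 0 ≤ q j)
    (hx : ∀ i j, star (x i) ⬝ᵥ x j = if i = j then 1 else 0)
    (hy : ∀ i j, star (y i) ⬝ᵥ y j = if i = j then 1 else 0)
    (hρdec : ρ = ∑ i, (p i : ℂ) • vecMulVec (x i) (star (x i)))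
    (hσdec : σ = ∑ j, (q j : ℂ) • vecMulVec (y j) (star (y j))) :
    Filter.Tendsto (fun α => Salpha α ρ σ) (𝓝[≠] (1 : ℝ))
      (𝓝 ((∑ i, p i * Real.log (p i))
          - ∑ i, ∑ j, p i * Real.log (q j) * ‖star (x i) ⬝ᵥ y j‖ ^ 2)) ∧
    (∑ i, p i * Real.log (p i))
          - ∑ i, ∑ j, p i * Real.log (q j) * ‖star (x i) ⬝ᵥ y j‖ ^ 2
      = (ρ * mLog ρ).trace.re - (ρ * mLog σ).trace.re :=
  Salpha_tendsto_umegaki_general ρ σ hρ1 hσ hσ1 p q x y hp hx hy hρdec hσdec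
end

section
/- Let ρ and σ be density matrices on ℂ^n with range(ρ) ⊆ range(σ). Then as α → 0 from the right (with 0 < α < 1), the quantum relative α-entropy S_α(ρ‖σ) tends to log(rank σ) − log(rank ρ), i.e., lim_{α→0⁺} S_α(ρ‖σ) = log( Tr(Π_σ) / Tr(Π_ρ) ), where Π_ρ and Π_σ are the orthogonal projections onto range(ρ) and range(σ), so that Tr(Π_ρ) = rank ρ and Tr(Π_σ) = rank σ. -/
open Matrix ComplexOrder

/-- The orthogonal projection `Π_A` onto the range (support) of a Hermitian matrix,
via its spectral decomposition (and `0` if `A` is not Hermitian). -/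
noncomputable def suppProj {m : Type*} [Fintype m] [DecidableEq m]
    (A : Matrix m m ℂ) : Matrix m m ℂ :=
  if hA : A.IsHermitian then
    (hA.eigenvectorUnitary : Matrix m m ℂ) *
      Matrix.diagonal (fun i => if hA.eigenvalues i = 0 then (0 : ℂ) else 1) *
      star (hA.eigenvectorUnitary : Matrix m m ℂ)
  else 0

/-! In an eigenbasis of a Hermitian `A`, the matrix `A ^ α` is diagonal with entries
`λᵢ ^ α`, which tend to `1` or `0` according as `λᵢ ≠ 0` or `λᵢ = 0`; hence `A ^ α → Π_A`
and `Tr A ^ α → rank A` as `α → 0⁺`. Because `0 ^ r = 0` for `r ≠ 0`, the map `r ↦ σ ^ r`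
is continuous at `r = -1`, so `Tr(ρ σ ^ (α - 1))` tends to `Tr(ρ σ ^ (-1))`, which is
positive because `ρ` has no weight on the kernel of `σ`. The first term of `S_α` therefore
vanishes in the limit through its factor `α / (1 - α)`, and the other two tend to
`-log rank ρ` and `log rank σ`. -/

open Filter Topology

section Unitary

variable {m : Type*} [Fintype m] [DecidableEq m]

lemma trace_unitary_mul_diagonal_mul_star (U : unitaryGroup m ℂ) (d : m → ℂ) :
    ((U : Matrix m m ℂ) * diagonal d * star (U : Matrix m m ℂ)).trace = ∑ i, d i := by
  rw [trace_mul_cycle, UnitaryGroup.star_mul_self, one_mul, trace_diagonal]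

lemma trace_mul_unitary_mul_diagonal_mul_star (B : Matrix m m ℂ) (U : unitaryGroup m ℂ)
    (d : m → ℂ) :
    (B * ((U : Matrix m m ℂ) * diagonal d * star (U : Matrix m m ℂ))).trace
      = ∑ j, (star (U : Matrix m m ℂ) * B * U) j j * d j := by
  rw [← Matrix.mul_assoc, ← Matrix.mul_assoc, trace_mul_cycle, ← Matrix.mul_assoc]
  simp [trace, mul_diagonal]

omit [DecidableEq m] in
lemma star_mul_mul_apply_self_eq_dotProduct (B U : Matrix m m ℂ) (j : m) :
    (star U * B * U) j j = star (fun k => U k j) ⬝ᵥ (B *ᵥ fun k => U k j) := by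
  simp only [mul_apply, dotProduct, mulVec, star_apply, Pi.star_apply, Finset.sum_mul,
    Finset.mul_sum]
  rw [Finset.sum_comm]
  simp only [mul_assoc]

end Unitary

section Power

lemma tendsto_rpow_nhdsGT_zero (e : ℝ) :
    Tendsto (fun α : ℝ => e ^ α) (𝓝[>] 0) (𝓝 (if e = 0 then 0 else 1)) := by
  split_ifs with he
  · refine tendsto_const_nhds.congr' ?_
    filter_upwards [self_mem_nhdsWithin] with α hα
    rw [he, Real.zero_rpow hα.ne']
  · have := (Real.continuousAt_const_rpow he (b := 0)).tendsto
    rw [Real.rpow_zero] at this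
    exact this.mono_left nhdsWithin_le_nhds

variable {m : Type*} [Fintype m] [DecidableEq m] {A : Matrix m m ℂ}

lemma mRpow_eq_of_isHermitian (hA : A.IsHermitian) :
    mRpow A = fun r => (hA.eigenvectorUnitary : Matrix m m ℂ) *
      diagonal (fun i => ((hA.eigenvalues i ^ r : ℝ) : ℂ)) *
      star (hA.eigenvectorUnitary : Matrix m m ℂ) :=
  funext fun _ => dif_pos hA

lemma continuousAt_mRpow (hA : A.IsHermitian) {r : ℝ} (hr : r ≠ 0) :
    ContinuousAt (mRpow A) r := by
  rw [mRpow_eq_of_isHermitian hA]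
  refine (continuousAt_const.mul (continuous_id.matrix_diagonal.continuousAt.comp ?_)).mul
    continuousAt_const
  exact continuousAt_pi.2 fun i =>
    Complex.continuous_ofReal.continuousAt.comp (Real.continuousAt_const_rpow' hr)

lemma tendsto_mRpow_nhdsGT_zero (hA : A.IsHermitian) :
    Tendsto (mRpow A) (𝓝[>] 0) (𝓝 (suppProj A)) := by
  rw [mRpow_eq_of_isHermitian hA, suppProj, dif_pos hA]
  refine ((continuous_const.mul continuous_id).mul continuous_const).continuousAt.tendsto.comp
    (continuous_id.matrix_diagonal.continuousAt.tendsto.comp (tendsto_pi_nhds.2 fun i => ?_))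
  show Tendsto (fun α => ((hA.eigenvalues i ^ α : ℝ) : ℂ)) _
    (𝓝 (if hA.eigenvalues i = 0 then 0 else 1))
  have h := (Complex.continuous_ofReal.tendsto _).comp
    (tendsto_rpow_nhdsGT_zero (hA.eigenvalues i))
  split_ifs at h ⊢ <;> simp only [Complex.ofReal_zero, Complex.ofReal_one] at h <;> exact h

lemma trace_suppProj (hA : A.IsHermitian) : (suppProj A).trace = (A.rank : ℂ) := by
  rw [suppProj, dif_pos hA, trace_unitary_mul_diagonal_mul_star, hA.rank_eq_card_non_zero_eigs,
    Fintype.card_subtype, Finset.natCast_card_filter]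
  simp only [ne_eq, ite_not]

omit [DecidableEq m] in
lemma Matrix.IsHermitian.rank_pos (hA : A.IsHermitian) (h : A ≠ 0) : 0 < A.rank := by
  classical
  obtain ⟨i, hi⟩ := Function.ne_iff.1 (mt hA.eigenvalues_eq_zero_iff.1 h)
  rw [hA.rank_eq_card_non_zero_eigs]
  exact Fintype.card_pos_iff.2 ⟨⟨i, hi⟩⟩

lemma tendsto_re_trace_mRpow_nhdsGT_zero (hA : A.IsHermitian) :
    Tendsto (fun α => (mRpow A α).trace.re) (𝓝[>] 0) (𝓝 A.rank) := by
  have := ((Complex.continuous_re.comp continuous_id.matrix_trace).tendsto _).comp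
      (tendsto_mRpow_nhdsGT_zero hA)
  simpa [Function.comp_def, trace_suppProj hA] using this

end Power

section Support

variable {m : Type*} [Fintype m] [DecidableEq m] {ρ σ : Matrix m m ℂ}

lemma dotProduct_mulVec_eq_zero_of_range_le (hσ : σ.IsHermitian)
    (hsupp : LinearMap.range (toEuclideanLin ρ) ≤ LinearMap.range (toEuclideanLin σ))
    {v : m → ℂ} (hv : σ *ᵥ v = 0) : star v ⬝ᵥ (ρ *ᵥ v) = 0 := by
  obtain ⟨w, hw⟩ := hsupp (LinearMap.mem_range_self _ (WithLp.toLp 2 v))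
  have hw' : σ *ᵥ w.ofLp = ρ *ᵥ v := congrArg WithLp.ofLp hw
  rw [← hw', dotProduct_mulVec, ← hσ.eq, ← star_mulVec, hv, star_zero, zero_dotProduct]

lemma re_trace_mul_mRpow_neg_one_pos (hρ : ρ.PosSemidef) (hρ0 : ρ.trace ≠ 0)
    (hσ : σ.PosSemidef)
    (hsupp : LinearMap.range (toEuclideanLin ρ) ≤ LinearMap.range (toEuclideanLin σ)) :
    0 < (ρ * mRpow σ (-1)).trace.re := by
  set U : Matrix m m ℂ := (hσ.1.eigenvectorUnitary : Matrix m m ℂ)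
  set c : m → ℂ := fun j => (star U * ρ * U) j j
  have hc_nonneg : ∀ j, 0 ≤ c j := fun j =>
    (hρ.conjTranspose_mul_mul_same U).diag_nonneg
  have hc_sum : ∑ j, c j = ρ.trace := by
    change (star U * ρ * U).trace = ρ.trace
    rw [trace_mul_cycle, Unitary.mul_star_self_of_mem hσ.1.eigenvectorUnitary.2, one_mul]
  have hc_supp : ∀ j, hσ.1.eigenvalues j = 0 → c j = 0 := fun j hj => by
    change (star U * ρ * U) j j = 0
    rw [star_mul_mul_apply_self_eq_dotProduct]
    exact dotProduct_mulVec_eq_zero_of_range_le hσ.1 hsupp (v := ⇑(hσ.1.eigenvectorBasis j))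
      (by rw [hσ.1.mulVec_eigenvectorBasis, hj, zero_smul])
  obtain ⟨j, hj⟩ : ∃ j, c j ≠ 0 := by
    by_contra! h
    exact hρ0 (by rw [← hc_sum, Finset.sum_eq_zero fun j _ => h j])
  have hμj : 0 < hσ.1.eigenvalues j := (hσ.eigenvalues_nonneg j).lt_of_ne' (mt (hc_supp j) hj)
  suffices 0 < ∑ j, c j * ((hσ.1.eigenvalues j ^ (-1 : ℝ) : ℝ) : ℂ) by
    rw [mRpow, dif_pos hσ.1, trace_mul_unitary_mul_diagonal_mul_star]
    exact (Complex.pos_iff.1 this).1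
  refine Finset.sum_pos' (fun i _ => mul_nonneg (hc_nonneg i) ?_) ⟨j, Finset.mem_univ j, ?_⟩
  · exact Complex.zero_le_real.2 (Real.rpow_nonneg (hσ.eigenvalues_nonneg i) _)
  · exact mul_pos ((hc_nonneg j).lt_of_ne' hj)
      (Complex.zero_lt_real.2 (Real.rpow_pos_of_pos hμj _))

end Support

open Topology in
/-- If `range(ρ) ⊆ range(σ)`, then as `α → 0⁺`,
`S_α(ρ‖σ) → log(Tr Π_σ / Tr Π_ρ) = log(rank σ) − log(rank ρ)`. -/
theorem Salpha_tendsto_zero {n : ℕ}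
    (ρ σ : Matrix (Fin n) (Fin n) ℂ)
    (hρ : ρ.PosSemidef) (hρ1 : ρ.trace = 1)
    (hσ : σ.PosSemidef) (hσ1 : σ.trace = 1)
    (hsupp : LinearMap.range (Matrix.toEuclideanLin ρ) ≤
      LinearMap.range (Matrix.toEuclideanLin σ)) :
    Filter.Tendsto (fun α => Salpha α ρ σ) (𝓝[>] (0 : ℝ))
      (𝓝 (Real.log ((σ.rank : ℝ)) - Real.log ((ρ.rank : ℝ)))) ∧
    (suppProj ρ).trace = (ρ.rank : ℂ) ∧ (suppProj σ).trace = (σ.rank : ℂ) := by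
  refine ⟨?_, trace_suppProj hρ.1, trace_suppProj hσ.1⟩
  have hρ0 : ρ ≠ 0 := by rintro rfl; simp at hρ1
  have hσ0 : σ ≠ 0 := by rintro rfl; simp at hσ1
  have hα : Tendsto (fun α : ℝ => α) (𝓝[>] 0) (𝓝 0) := nhdsWithin_le_nhds
  have hcross : Tendsto (fun α => (ρ * mRpow σ (α - 1)).trace.re) (𝓝[>] 0)
      (𝓝 (ρ * mRpow σ (-1)).trace.re) := by
    have hcont : ContinuousAt (fun r => (ρ * mRpow σ r).trace.re) (-1) :=
      (Complex.continuous_re.comp continuous_id.matrix_trace).continuousAt.comp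
        (continuousAt_const.mul (continuousAt_mRpow hσ.1 (by norm_num)))
    exact hcont.tendsto.comp (by simpa using hα.sub_const 1)
  have hlogρ := (tendsto_re_trace_mRpow_nhdsGT_zero hρ.1).log
    (Nat.cast_ne_zero.2 (hρ.1.rank_pos hρ0).ne')
  have hlogσ := (tendsto_re_trace_mRpow_nhdsGT_zero hσ.1).log
    (Nat.cast_ne_zero.2 (hσ.1.rank_pos hσ0).ne')
  have hlogcross := hcross.log (re_trace_mul_mRpow_neg_one_pos hρ (by simp [hρ1]) hσ hsupp).ne'
  have h1α : Tendsto (fun α : ℝ => 1 - α) (𝓝[>] 0) (𝓝 1) := by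
    simpa using tendsto_const_nhds.sub hα
  have := (((hα.div h1α one_ne_zero).mul hlogcross).sub
    (((tendsto_const_nhds (x := (1 : ℝ))).div h1α one_ne_zero).mul hlogρ)).add hlogσ
  convert this using 1
  · rfl
  · congr 1
    ring
end

section
/- Let α > 0 with α ≠ 1, and let ρ and σ be density matrices on ℂ^n with σ positive definite, with spectral decompositions ρ = Σ_i p_i |x_i⟩⟨x_i| and σ = Σ_j q_j |y_j⟩⟨y_j| for orthonormal bases {|x_i⟩}, {|y_j⟩}. Define the escort Nussbaum–Szkoła distributions on {1,…,n}×{1,…,n} by P^{(α)}(i,j) = p_i^α·|⟨x_i|y_j⟩|²/Tr(ρ^α) and Q^{(α)}(i,j) = q_j^α·|⟨x_i|y_j⟩|²/Tr(σ^α), let s = sgn((1−α)/α) (so s = 1 for α < 1 and s = −1 for α > 1), and let f(x) = s·(x^{1/α} − 1). Then the quantum relative α-entropy equals the classical relative α-entropy of the Nussbaum–Szkoła distributions: S_α(ρ‖σ) = (α/(1−α))·log[ s·D_f(P^{(α)} ‖ Q^{(α)}) + 1 ], where D_f(P^{(α)} ‖ Q^{(α)}) = Σ_{(i,j): ⟨x_i|y_j⟩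 ≠ 0} f( P^{(α)}(i,j) / Q^{(α)}(i,j) )·Q^{(α)}(i,j). -/
open Matrix ComplexOrder

namespace Matrix

variable {m : Type*}

lemma isHermitian_sum_smul_vecMulVec {ι : Type*} [Fintype ι] (c : ι → ℝ) (y : ι → m → ℂ) :
    (∑ j, (c j : ℂ) • vecMulVec (y j) (star (y j))).IsHermitian := by
  simp [IsHermitian, conjTranspose_sum, conjTranspose_smul]

variable [Fintype m]

lemma vecMulVec_star_mulVec (u v : m → ℂ) :
    vecMulVec u (star u) *ᵥ v = (star u ⬝ᵥ v) • u := by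
  rw [vecMulVec_mulVec, op_smul_eq_smul]

lemma ofReal_norm_dotProduct_sq (u v : m → ℂ) :
    ((‖star u ⬝ᵥ v‖ ^ 2 : ℝ) : ℂ) = (star u ⬝ᵥ v) * (star v ⬝ᵥ u) := by
  rw [star_dotProduct v u]
  push_cast
  exact (Complex.mul_conj' _).symm

lemma norm_star_dotProduct_comm (u v : m → ℂ) : ‖star u ⬝ᵥ v‖ = ‖star v ⬝ᵥ u‖ := by
  rw [star_dotProduct, norm_star]

lemma trace_sum_smul_vecMulVec_mul_sum_smul_vecMulVec {ι κ : Type*} [Fintype ι] [Fintype κ]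
    (a : ι → ℂ) (b : κ → ℂ) (x : ι → m → ℂ) (y : κ → m → ℂ) :
    trace ((∑ i, a i • vecMulVec (x i) (star (x i))) * ∑ j, b j • vecMulVec (y j) (star (y j)))
      = ∑ i, ∑ j, a i * b j * ((‖star (x i) ⬝ᵥ y j‖ ^ 2 : ℝ) : ℂ) := by
  simp_rw [Finset.sum_mul_sum, trace_sum, smul_mul_smul, trace_smul, vecMulVec_mul_vecMulVec,
    trace_vecMulVec, dotProduct_smul, ofReal_norm_dotProduct_sq, dotProduct_comm (x _),
    smul_eq_mul]

variable [DecidableEq m]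

lemma diagonal_mulVec_comp_of_mulVec_eq_smul {d : m → ℝ} {w : m → ℂ} {a : ℝ}
    (h : diagonal (fun i => (d i : ℂ)) *ᵥ w = (a : ℂ) • w) (g : ℝ → ℝ) :
    diagonal (fun i => (g (d i) : ℂ)) *ᵥ w = (g a : ℂ) • w := by
  ext i
  have hi := congrFun h i
  simp only [mulVec_diagonal, Pi.smul_apply, smul_eq_mul] at hi ⊢
  rcases mul_eq_mul_right_iff.mp hi with hda | hw
  · rw [Complex.ofReal_inj.mp hda]
  · rw [hw, mul_zero, mul_zero]

lemma mRpow_mulVec_of_mulVec_eq_smul {A : Matrix m m ℂ} (hA : A.IsHermitian) {v : m → ℂ}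
    {a : ℝ} (hv : A *ᵥ v = (a : ℂ) • v) (r : ℝ) :
    mRpow A r *ᵥ v = ((a ^ r : ℝ) : ℂ) • v := by
  set U : Matrix m m ℂ := ↑hA.eigenvectorUnitary
  have hU : star U * U = 1 := Unitary.coe_star_mul_self _
  have hU' : U * star U = 1 := Unitary.coe_mul_star_self _
  have hspec : A = U * diagonal (fun i => (hA.eigenvalues i : ℂ)) * star U :=
    hA.spectral_theorem
  have hw : diagonal (fun i => (hA.eigenvalues i : ℂ)) *ᵥ (star U *ᵥ v)
      = (a : ℂ) • (star U *ᵥ v) := by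
    have h := congrArg (star U *ᵥ ·) hv
    rw [hspec] at h
    simpa only [mulVec_mulVec, ← mul_assoc, hU, one_mul, mulVec_smul] using h
  rw [mRpow, dif_pos hA, ← mulVec_mulVec, ← mulVec_mulVec,
    diagonal_mulVec_comp_of_mulVec_eq_smul hw (· ^ r), mulVec_smul, mulVec_mulVec, hU',
    one_mulVec]

section Orthonormal

variable {y : m → m → ℂ}

lemma sum_vecMulVec_star_eq_one (hy : ∀ i j, star (y i) ⬝ᵥ y j = if i = j then 1 else 0) :
    ∑ k, vecMulVec (y k) (star (y k)) = 1 := by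
  set Y : Matrix m m ℂ := (of y)ᵀ
  have hY : Yᴴ * Y = 1 := by
    ext i j
    simpa [Y, mul_apply, dotProduct, one_apply] using hy i j
  ext a b
  rw [← mul_eq_one_comm.mp hY]
  simp [Y, mul_apply, sum_apply, vecMulVec_apply]

lemma eq_of_forall_mulVec_eq (hy : ∀ i j, star (y i) ⬝ᵥ y j = if i = j then 1 else 0)
    {M N : Matrix m m ℂ} (h : ∀ k, M *ᵥ y k = N *ᵥ y k) : M = N := by
  rw [← M.mul_one, ← N.mul_one, ← sum_vecMulVec_star_eq_one hy, Finset.mul_sum, Finset.mul_sum]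
  simp_rw [mul_vecMulVec, h]

lemma sum_smul_vecMulVec_mulVec (hy : ∀ i j, star (y i) ⬝ᵥ y j = if i = j then 1 else 0)
    (c : m → ℂ) (k : m) :
    (∑ j, c j • vecMulVec (y j) (star (y j))) *ᵥ y k = c k • y k := by
  simp [sum_mulVec, smul_mulVec, vecMulVec_star_mulVec, hy]

lemma trace_sum_smul_vecMulVec (hy : ∀ i j, star (y i) ⬝ᵥ y j = if i = j then 1 else 0)
    (c : m → ℂ) :
    trace (∑ j, c j • vecMulVec (y j) (star (y j))) = ∑ j, c j := by
  simp [trace_sum, trace_smul, trace_vecMulVec, dotProduct_comm _ (star _), hy]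

lemma sum_norm_dotProduct_sq_eq_one (hy : ∀ i j, star (y i) ⬝ᵥ y j = if i = j then 1 else 0)
    {v : m → ℂ} (hv : star v ⬝ᵥ v = 1) :
    ∑ j, ‖star (y j) ⬝ᵥ v‖ ^ 2 = 1 := by
  have h : ((∑ j, ‖star (y j) ⬝ᵥ v‖ ^ 2 : ℝ) : ℂ)
      = star v ⬝ᵥ ((∑ j, vecMulVec (y j) (star (y j))) *ᵥ v) := by
    rw [sum_mulVec, dotProduct_sum]
    push_cast
    refine Finset.sum_congr rfl fun j _ => ?_
    rw [← Complex.ofReal_pow, ofReal_norm_dotProduct_sq, vecMulVec_star_mulVec, dotProduct_smul,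
      smul_eq_mul, mul_comm]
  rw [sum_vecMulVec_star_eq_one hy, one_mulVec, hv] at h
  exact_mod_cast h

lemma mRpow_sum_smul_vecMulVec (hy : ∀ i j, star (y i) ⬝ᵥ y j = if i = j then 1 else 0)
    (c : m → ℝ) (r : ℝ) :
    mRpow (∑ j, (c j : ℂ) • vecMulVec (y j) (star (y j))) r
      = ∑ j, ((c j ^ r : ℝ) : ℂ) • vecMulVec (y j) (star (y j)) :=
  eq_of_forall_mulVec_eq hy fun k => by
    rw [mRpow_mulVec_of_mulVec_eq_smul (isHermitian_sum_smul_vecMulVec c y)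
      (sum_smul_vecMulVec_mulVec hy _ k), sum_smul_vecMulVec_mulVec hy]

lemma re_trace_mRpow_sum_smul_vecMulVec
    (hy : ∀ i j, star (y i) ⬝ᵥ y j = if i = j then 1 else 0) (c : m → ℝ) (r : ℝ) :
    (mRpow (∑ j, (c j : ℂ) • vecMulVec (y j) (star (y j))) r).trace.re = ∑ j, c j ^ r := by
  rw [mRpow_sum_smul_vecMulVec hy, trace_sum_smul_vecMulVec hy, ← Complex.ofReal_sum,
    Complex.ofReal_re]

lemma re_trace_mul_mRpow_sum_smul_vecMulVec
    (hy : ∀ i j, star (y i) ⬝ᵥ y j = if i = j then 1 else 0) (p c : m → ℝ) (x : m → m → ℂ)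
    (r : ℝ) :
    ((∑ i, (p i : ℂ) • vecMulVec (x i) (star (x i))) *
        mRpow (∑ j, (c j : ℂ) • vecMulVec (y j) (star (y j))) r).trace.re
      = ∑ i, ∑ j, p i * c j ^ r * ‖star (x i) ⬝ᵥ y j‖ ^ 2 := by
  rw [mRpow_sum_smul_vecMulVec hy, trace_sum_smul_vecMulVec_mul_sum_smul_vecMulVec]
  norm_cast

lemma PosDef.pos_of_eq_sum_smul_vecMulVec {A : Matrix m m ℂ} (hA : A.PosDef)
    (hy : ∀ i j, star (y i) ⬝ᵥ y j = if i = j then 1 else 0) {c : m → ℝ}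
    (hAc : A = ∑ j, (c j : ℂ) • vecMulVec (y j) (star (y j))) (k : m) : 0 < c k := by
  have hyk : y k ≠ 0 := fun h => by simpa [h] using hy k k
  have h := hA.dotProduct_mulVec_pos hyk
  rw [hAc, sum_smul_vecMulVec_mulVec hy, dotProduct_smul, hy, if_pos rfl, smul_eq_mul,
    mul_one] at h
  exact_mod_cast h

end Orthonormal

end Matrix

open Real

lemma escort_rpow_div_mul_eq {α a b c A B : ℝ} (hα : α ≠ 0) (ha : 0 ≤ a) (hb : 0 < b) (hA : 0 < A)
    (hB : 0 < B) :
    ((a ^ α * c / A) / (b ^ α * c / B)) ^ (1 / α) * (b ^ α * c / B)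
      = a * b ^ (α - 1) * c * (B ^ (1 / α - 1) * A ^ (-(1 / α))) := by
  rcases eq_or_ne c 0 with rfl | hc
  · simp
  have hbα : 0 < b ^ α := rpow_pos_of_pos hb α
  have hratio : (a ^ α * c / A) / (b ^ α * c / B) = (a ^ α / A) * (B / b ^ α) := by
    field_simp
  have hroot : ∀ {t : ℝ}, 0 ≤ t → (t ^ α) ^ (1 / α) = t := fun ht => by
    rw [← rpow_mul ht, mul_one_div_cancel hα, rpow_one]
  rw [hratio, mul_rpow (by positivity) (by positivity), div_rpow (by positivity) hA.le,
    div_rpow hB.le hbα.le, hroot ha, hroot hb.le, rpow_sub hB, rpow_one, rpow_neg hA.le,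
    rpow_sub hb, rpow_one]
  field_simp

variable {ι κ : Type*} [Fintype ι] [Fintype κ]

lemma exists_pos_of_sum_eq_one {p : ι → ℝ} (hp : ∀ i, 0 ≤ p i) (hp1 : ∑ i, p i = 1) :
    ∃ i, 0 < p i := by
  obtain ⟨i, -, hi⟩ := Finset.exists_ne_zero_of_sum_ne_zero (hp1 ▸ one_ne_zero)
  exact ⟨i, (hp i).lt_of_ne' hi⟩

lemma sum_escort_rpow_div_mul_eq {α : ℝ} (hα : α ≠ 0) {p : ι → ℝ} {q : κ → ℝ} (c : ι → κ → ℝ)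
    (hp : ∀ i, 0 ≤ p i) (hq : ∀ j, 0 < q j) {A B : ℝ} (hA : 0 < A) (hB : 0 < B) :
    ∑ i, ∑ j, ((p i ^ α * c i j / A) / (q j ^ α * c i j / B)) ^ (1 / α) * (q j ^ α * c i j / B)
      = (∑ i, ∑ j, p i * q j ^ (α - 1) * c i j) * (B ^ (1 / α - 1) * A ^ (-(1 / α))) := by
  simp_rw [escort_rpow_div_mul_eq hα (hp _) (hq _) hA hB, Finset.sum_mul]

lemma sum_sum_escort_eq_one (α : ℝ) (q : κ → ℝ) {c : ι → κ → ℝ} (hc : ∀ j, ∑ i, c i j = 1)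
    (hq : ∑ j, q j ^ α ≠ 0) :
    ∑ i, ∑ j, q j ^ α * c i j / ∑ j, q j ^ α = 1 := by
  rw [Finset.sum_comm]
  simp_rw [← Finset.sum_div, ← Finset.mul_sum, hc, mul_one]
  exact div_self hq

lemma sum_rpow_pos (α : ℝ) {p : ι → ℝ} (hp : ∀ i, 0 ≤ p i) (hp1 : ∑ i, p i = 1) :
    0 < ∑ i, p i ^ α := by
  obtain ⟨i, hi⟩ := exists_pos_of_sum_eq_one hp hp1
  exact Finset.sum_pos' (fun j _ => rpow_nonneg (hp j) α)
    ⟨i, Finset.mem_univ i, rpow_pos_of_pos hi α⟩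

lemma sum_sum_mul_rpow_mul_pos (β : ℝ) {p : ι → ℝ} {q : κ → ℝ} {c : ι → κ → ℝ}
    (hp : ∀ i, 0 ≤ p i) (hp1 : ∑ i, p i = 1) (hq : ∀ j, 0 < q j) (hc : ∀ i j, 0 ≤ c i j)
    (hrow : ∀ i, ∑ j, c i j = 1) :
    0 < ∑ i, ∑ j, p i * q j ^ β * c i j := by
  obtain ⟨i, hi⟩ := exists_pos_of_sum_eq_one hp hp1
  obtain ⟨j, hj⟩ := exists_pos_of_sum_eq_one (hc i) (hrow i)
  have hterm : ∀ i j, 0 ≤ p i * q j ^ β * c i j := fun i j =>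
    mul_nonneg (mul_nonneg (hp i) (rpow_pos_of_pos (hq j) β).le) (hc i j)
  refine Finset.sum_pos' (fun i _ => Finset.sum_nonneg fun j _ => hterm i j)
    ⟨i, Finset.mem_univ i, Finset.sum_pos' (fun j _ => hterm i j) ⟨j, Finset.mem_univ j, ?_⟩⟩
  exact mul_pos (mul_pos hi (rpow_pos_of_pos (hq j) β)) hj

lemma mul_sum_sum_sign_add_one {s : ℝ} (hs : s * s = 1) (g Q : ι → κ → ℝ)
    (hQ : ∑ i, ∑ j, Q i j = 1) :
    s * ∑ i, ∑ j, s * (g i j - 1) * Q i j + 1 = ∑ i, ∑ j, g i j * Q i j := by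
  simp_rw [Finset.mul_sum, ← mul_assoc, hs, one_mul, sub_one_mul, Finset.sum_sub_distrib, hQ]
  ring

lemma log_mul_rpow_mul_rpow {α T A B : ℝ} (hα0 : α ≠ 0) (hα1 : α ≠ 1) (hT : 0 < T) (hA : 0 < A)
    (hB : 0 < B) :
    α / (1 - α) * log (T * (B ^ (1 / α - 1) * A ^ (-(1 / α))))
      = α / (1 - α) * log T - 1 / (1 - α) * log A + log B := by
  have h1α : 1 - α ≠ 0 := sub_ne_zero.mpr hα1.symm
  rw [log_mul hT.ne' (by positivity), log_mul (by positivity) (by positivity), log_rpow hB,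
    log_rpow hA]
  field_simp
  ring

lemma log_sum_mul_rpow_mul_eq_log_escort_divergence {α s : ℝ} (hα : 0 < α) (hα1 : α ≠ 1)
    (hs : s * s = 1) {p : ι → ℝ} {q : κ → ℝ} {c : ι → κ → ℝ} (hp : ∀ i, 0 ≤ p i)
    (hp1 : ∑ i, p i = 1) (hq : ∀ j, 0 < q j) (hq1 : ∑ j, q j = 1) (hc : ∀ i j, 0 ≤ c i j)
    (hrow : ∀ i, ∑ j, c i j = 1) (hcol : ∀ j, ∑ i, c i j = 1) :
    α / (1 - α) * log (∑ i, ∑ j, p i * q j ^ (α - 1) * c i j)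
        - 1 / (1 - α) * log (∑ i, p i ^ α) + log (∑ j, q j ^ α)
      = α / (1 - α) * log (s * ∑ i, ∑ j,
          s * (((p i ^ α * c i j / ∑ i, p i ^ α) / (q j ^ α * c i j / ∑ j, q j ^ α)) ^ (1 / α)
            - 1) * (q j ^ α * c i j / ∑ j, q j ^ α) + 1) := by
  have hA := sum_rpow_pos α hp hp1
  have hB := sum_rpow_pos α (fun j => (hq j).le) hq1
  rw [mul_sum_sum_sign_add_one hs _ _ (sum_sum_escort_eq_one α q hcol hB.ne'),
    sum_escort_rpow_div_mul_eq hα.ne' c hp hq hA hB,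
    log_mul_rpow_mul_rpow hα.ne' hα1 (sum_sum_mul_rpow_mul_pos _ hp hp1 hq hc hrow) hA hB]

theorem Salpha_eq_nz_relative_entropy_general {n : ℕ} (α : ℝ) (hα : 0 < α) (hα1 : α ≠ 1)
    (ρ σ : Matrix (Fin n) (Fin n) ℂ)
    (hρ1 : ρ.trace = 1)
    (hσ : σ.PosDef) (hσ1 : σ.trace = 1)
    (p q : Fin n → ℝ) (x y : Fin n → (Fin n → ℂ))
    (hp : ∀ i, 0 ≤ p i)
    (hx : ∀ i j, star (x i) ⬝ᵥ x j = if i = j then 1 else 0)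
    (hy : ∀ i j, star (y i) ⬝ᵥ y j = if i = j then 1 else 0)
    (hρdec : ρ = ∑ i, (p i : ℂ) • vecMulVec (x i) (star (x i)))
    (hσdec : σ = ∑ j, (q j : ℂ) • vecMulVec (y j) (star (y j)))
    (Pα Qα : Fin n → Fin n → ℝ)
    (hP : ∀ i j, Pα i j = p i ^ α * ‖star (x i) ⬝ᵥ y j‖ ^ 2 / (mRpow ρ α).trace.re)
    (hQ : ∀ i j, Qα i j = q j ^ α * ‖star (x i) ⬝ᵥ y j‖ ^ 2 / (mRpow σ α).trace.re)
    (s : ℝ) (hs : s = if α < 1 then 1 else -1)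
    (f : ℝ → ℝ) (hf : ∀ z : ℝ, f z = s * (z ^ (1/α) - 1))
    (Df : ℝ)
    (hDf : Df = ∑ i, ∑ j,
      if star (x i) ⬝ᵥ y j = 0 then 0 else f (Pα i j / Qα i j) * Qα i j) :
    Salpha α ρ σ = α / (1 - α) * Real.log (s * Df + 1) := by
  have hp1 : ∑ i, p i = 1 := by
    rw [hρdec, trace_sum_smul_vecMulVec hx] at hρ1
    exact_mod_cast hρ1
  have hq1 : ∑ j, q j = 1 := by
    rw [hσdec, trace_sum_smul_vecMulVec hy] at hσ1
    exact_mod_cast hσ1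
  have htrρ : (mRpow ρ α).trace.re = ∑ i, p i ^ α := by
    rw [hρdec, re_trace_mRpow_sum_smul_vecMulVec hx]
  have htrσ : (mRpow σ α).trace.re = ∑ j, q j ^ α := by
    rw [hσdec, re_trace_mRpow_sum_smul_vecMulVec hy]
  have htrρσ : (ρ * mRpow σ (α - 1)).trace.re
      = ∑ i, ∑ j, p i * q j ^ (α - 1) * ‖star (x i) ⬝ᵥ y j‖ ^ 2 := by
    rw [hρdec, hσdec, re_trace_mul_mRpow_sum_smul_vecMulVec hy]
  have hrow : ∀ i, ∑ j, ‖star (x i) ⬝ᵥ y j‖ ^ 2 = 1 := fun i => by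
    simpa only [norm_star_dotProduct_comm (x i)] using
      sum_norm_dotProduct_sq_eq_one hy ((hx i i).trans (if_pos rfl))
  have hcol : ∀ j, ∑ i, ‖star (x i) ⬝ᵥ y j‖ ^ 2 = 1 := fun j =>
    sum_norm_dotProduct_sq_eq_one hx ((hy j j).trans (if_pos rfl))
  have hDf' : Df = ∑ i, ∑ j, s * ((Pα i j / Qα i j) ^ (1 / α) - 1) * Qα i j := by
    refine hDf.trans (Finset.sum_congr rfl fun i _ => Finset.sum_congr rfl fun j _ => ?_)
    split_ifs with h
    · simp [hQ, h]
    · rw [hf]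
  rw [Salpha, htrρσ, htrρ, htrσ, hDf']
  simp_rw [hP, hQ, htrρ, htrσ]
  exact log_sum_mul_rpow_mul_eq_log_escort_divergence hα hα1
    (by split_ifs at hs <;> norm_num [hs]) hp hp1 (hσ.pos_of_eq_sum_smul_vecMulVec hy hσdec) hq1
    (fun i j => by positivity) hrow hcol

/-- Nussbaum–Szkoła correspondence: the quantum relative α-entropy equals the classical
relative α-entropy of the (escort) Nussbaum–Szkoła distributions:
`S_α(ρ‖σ) = (α/(1−α))·log[ s·D_f(P^{(α)} ‖ Q^{(α)}) + 1 ]` with `s = sgn((1−α)/α)` and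
`f(x) = s(x^{1/α} − 1)`. -/
theorem Salpha_eq_nz_relative_entropy {n : ℕ} (α : ℝ) (hα : 0 < α) (hα1 : α ≠ 1)
    (ρ σ : Matrix (Fin n) (Fin n) ℂ)
    (hρ : ρ.PosSemidef) (hρ1 : ρ.trace = 1)
    (hσ : σ.PosDef) (hσ1 : σ.trace = 1)
    (p q : Fin n → ℝ) (x y : Fin n → (Fin n → ℂ))
    (hp : ∀ i, 0 ≤ p i) (hq : ∀ j, 0 ≤ q j)
    (hx : ∀ i j, star (x i) ⬝ᵥ x j = if i = j then 1 else 0)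
    (hy : ∀ i j, star (y i) ⬝ᵥ y j = if i = j then 1 else 0)
    (hρdec : ρ = ∑ i, (p i : ℂ) • vecMulVec (x i) (star (x i)))
    (hσdec : σ = ∑ j, (q j : ℂ) • vecMulVec (y j) (star (y j)))
    (Pα Qα : Fin n → Fin n → ℝ)
    (hP : ∀ i j, Pα i j = p i ^ α * ‖star (x i) ⬝ᵥ y j‖ ^ 2 / (mRpow ρ α).trace.re)
    (hQ : ∀ i j, Qα i j = q j ^ α * ‖star (x i) ⬝ᵥ y j‖ ^ 2 / (mRpow σ α).trace.re)
    (s : ℝ) (hs : s = if α < 1 then 1 else -1)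
    (f : ℝ → ℝ) (hf : ∀ z : ℝ, f z = s * (z ^ (1/α) - 1))
    (Df : ℝ)
    (hDf : Df = ∑ i, ∑ j,
      if star (x i) ⬝ᵥ y j = 0 then 0 else f (Pα i j / Qα i j) * Qα i j) :
    Salpha α ρ σ = α / (1 - α) * Real.log (s * Df + 1) :=
  Salpha_eq_nz_relative_entropy_general α hα hα1 ρ σ hρ1 hσ hσ1 p q x y hp hx hy hρdec hσdec Pα Qα
    hP hQ s hs f hf Df hDf
end
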